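/- arXiv:2603.09300 — 12 statements merged into one kernel-verified Lean document; each statement's English description precedes it below -/
import Mathlib

section
/- Let N ≥ 1, let w ∈ ℂ^N be nonzero, let a ∈ ℂ^N, and let ε ≥ 0. If |w^H a| ≥ ε‖w‖₂, then the minimum of |w^H (a + δ)| over all δ ∈ ℂ^N with ‖δ‖₂ ≤ ε equals |w^H a| − ε‖w‖₂, and this minimum is attained at δ = −(w/‖w‖₂) · ε · exp(j·arg(w^H a)). -/
/-!
The reverse triangle inequality and Cauchy–Schwarz give
`|w^H (a + δ)| ≥ |w^H a| - |w^H δ| ≥ |w^H a| - ε‖w‖` whenever `‖δ‖ ≤ ε`.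
The bound is attained by the perturbation `δ = s • w` aligned with `w`, whose phase is chosen so
that `w^H δ = -ε‖w‖ e^{j arg(w^H a)}` points against `w^H a`; then
`w^H (a + δ) = (|w^H a| - ε‖w‖) e^{j arg(w^H a)}`.
-/

open Complex

theorem sub_mul_norm_le_norm_inner_add {𝕜 E : Type*} [RCLike 𝕜] [NormedAddCommGroup E]
    [InnerProductSpace 𝕜 E] (w a : E) {δ : E} {ε : ℝ} (hδ : ‖δ‖ ≤ ε) :
    ‖inner 𝕜 w a‖ - ε * ‖w‖ ≤ ‖inner 𝕜 w (a + δ)‖ := by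
  have hwδ : ‖inner 𝕜 w δ‖ ≤ ε * ‖w‖ :=
    calc ‖inner 𝕜 w δ‖ ≤ ‖w‖ * ‖δ‖ := norm_inner_le_norm w δ
      _ ≤ ε * ‖w‖ := by rw [mul_comm]; gcongr
  have htri : ‖inner 𝕜 w a‖ ≤ ‖inner 𝕜 w (a + δ)‖ + ‖inner 𝕜 w δ‖ := by
    simpa [inner_add_right] using norm_sub_le (inner 𝕜 w (a + δ)) (inner 𝕜 w δ)
  linarith

theorem Complex.norm_sub_ofReal_mul_exp_arg_mul_I (c : ℂ) (t : ℝ) :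
    ‖c - t * exp (arg c * I)‖ = |‖c‖ - t| := by
  have hc : c - t * exp (arg c * I) = (‖c‖ - t : ℝ) * exp (arg c * I) := by
    rw [ofReal_sub, sub_mul, norm_mul_exp_arg_mul_I]
  rw [hc, norm_mul, norm_exp_ofReal_mul_I, mul_one, norm_real, Real.norm_eq_abs]

section AlignedPerturbation

variable {E : Type*} [NormedAddCommGroup E] [InnerProductSpace ℂ E]

theorem norm_neg_div_norm_mul_exp_smul_le (w : E) (ε θ : ℝ) :
    ‖((-(ε / ‖w‖ : ℝ) : ℂ) * exp (θ * I)) • w‖ ≤ |ε| := by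
  rcases eq_or_ne w 0 with rfl | hw
  · simp
  · have hw' : ‖w‖ ≠ 0 := norm_ne_zero_iff.mpr hw
    rw [norm_smul, norm_mul, norm_exp_ofReal_mul_I, mul_one, norm_neg, norm_real, norm_div,
      norm_norm, Real.norm_eq_abs, div_mul_cancel₀ _ hw']

theorem inner_add_neg_div_norm_mul_smul (w a : E) (ε : ℝ) (u : ℂ) :
    inner ℂ w (a + ((-(ε / ‖w‖ : ℝ) : ℂ) * u) • w) = inner ℂ w a - (ε * ‖w‖ : ℝ) * u := by
  rcases eq_or_ne w 0 with rfl | hw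
  · simp
  · have hw' : (‖w‖ : ℂ) ≠ 0 := ofReal_ne_zero.mpr (norm_ne_zero_iff.mpr hw)
    rw [inner_add_right, inner_smul_right, inner_self_eq_norm_sq_to_K,
      RCLike.ofReal_eq_complex_ofReal]
    push_cast
    field_simp
    ring

end AlignedPerturbation

theorem rab_worst_case_min_general (N : ℕ)
    (w a : EuclideanSpace ℂ (Fin N)) (ε : ℝ) (hε : 0 ≤ ε)
    (h : ε * ‖w‖ ≤ ‖(inner ℂ w a : ℂ)‖) :
    IsLeast {r : ℝ | ∃ δ : EuclideanSpace ℂ (Fin N), ‖δ‖ ≤ ε ∧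
        r = ‖(inner ℂ w (a + δ) : ℂ)‖}
      (‖(inner ℂ w a : ℂ)‖ - ε * ‖w‖) ∧
    ‖((-(ε / ‖w‖ : ℝ) : ℂ) * Complex.exp (((inner ℂ w a : ℂ).arg : ℂ) * Complex.I)) • w‖ ≤ ε ∧
    ‖(inner ℂ w
        (a + ((-(ε / ‖w‖ : ℝ) : ℂ) * Complex.exp (((inner ℂ w a : ℂ).arg : ℂ) * Complex.I)) • w) : ℂ)‖
      = ‖(inner ℂ w a : ℂ)‖ - ε * ‖w‖ := by
  have hnorm := (norm_neg_div_norm_mul_exp_smul_le w ε (inner ℂ w a).arg).trans_eq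
    (abs_of_nonneg hε)
  have hval : ‖inner ℂ w (a + ((-(ε / ‖w‖ : ℝ) : ℂ) *
      exp ((inner ℂ w a).arg * I)) • w)‖ = ‖inner ℂ w a‖ - ε * ‖w‖ := by
    rw [inner_add_neg_div_norm_mul_smul, norm_sub_ofReal_mul_exp_arg_mul_I,
      abs_of_nonneg (sub_nonneg.mpr h)]
  refine ⟨⟨⟨_, hnorm, hval.symm⟩, ?_⟩, hnorm, hval⟩
  rintro _ ⟨δ, hδ, rfl⟩
  exact sub_mul_norm_le_norm_inner_add w a hδ

/-- For nonzero `w`, any `a` and `ε ≥ 0` with `|w^H a| ≥ ε‖w‖₂`,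
the minimum of `|w^H (a + δ)|` over `‖δ‖₂ ≤ ε` equals `|w^H a| − ε‖w‖₂`,
attained at `δ = −(w/‖w‖₂)·ε·exp(j·arg(w^H a))`. -/
theorem rab_worst_case_min (N : ℕ) (hN : 1 ≤ N)
    (w a : EuclideanSpace ℂ (Fin N)) (hw : w ≠ 0) (ε : ℝ) (hε : 0 ≤ ε)
    (h : ε * ‖w‖ ≤ ‖(inner ℂ w a : ℂ)‖) :
    IsLeast {r : ℝ | ∃ δ : EuclideanSpace ℂ (Fin N), ‖δ‖ ≤ ε ∧
        r = ‖(inner ℂ w (a + δ) : ℂ)‖}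
      (‖(inner ℂ w a : ℂ)‖ - ε * ‖w‖) ∧
    ‖((-(ε / ‖w‖ : ℝ) : ℂ) * Complex.exp (((inner ℂ w a : ℂ).arg : ℂ) * Complex.I)) • w‖ ≤ ε ∧
    ‖(inner ℂ w
        (a + ((-(ε / ‖w‖ : ℝ) : ℂ) * Complex.exp (((inner ℂ w a : ℂ).arg : ℂ) * Complex.I)) • w) : ℂ)‖
      = ‖(inner ℂ w a : ℂ)‖ - ε * ‖w‖ :=
  rab_worst_case_min_general N w a ε hε h
end

section
/- Let N ≥ 1, let w, a ∈ ℂ^N and ε ≥ 0. Then |w^H (a + δ)| ≥ 1 holds for every δ ∈ ℂ^N with ‖δ‖₂ ≤ ε if and only if |w^H a| ≥ ε‖w‖₂ + 1. -/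
/-!
Write `⟪w, a + δ⟫ = ⟪w, a⟫ + ⟪w, δ⟫`. As `δ` ranges over the ball of radius `ε`, the perturbation
`⟪w, δ⟫` ranges over exactly the closed disc of radius `ε‖w‖` (Cauchy–Schwarz, with equality attained
along `w`), and a disc of radius `r` translated to the centre `z` stays outside the open unit disc iff
`r + 1 ≤ ‖z‖` (the worst point is `z - r z / ‖z‖`).
-/

open Metric

theorem image_inner_closedBall {𝕜 E : Type*} [RCLike 𝕜] [NormedAddCommGroup E]
    [InnerProductSpace 𝕜 E] (w : E) {ε : ℝ} (hε : 0 ≤ ε) :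
    (fun δ => (inner 𝕜 w δ : 𝕜)) '' closedBall 0 ε = closedBall 0 (ε * ‖w‖) := by
  ext u
  simp only [Set.mem_image, mem_closedBall_zero_iff]
  constructor
  · rintro ⟨δ, hδ, rfl⟩
    calc ‖(inner 𝕜 w δ : 𝕜)‖ ≤ ‖w‖ * ‖δ‖ := norm_inner_le_norm w δ
      _ ≤ ε * ‖w‖ := by rw [mul_comm]; gcongr
  · intro hu
    rcases eq_or_ne w 0 with rfl | hw
    · exact ⟨0, by simpa using hε, by simpa [eq_comm] using hu⟩
    have hw' : 0 < ‖w‖ := norm_pos_iff.mpr hw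
    refine ⟨(u / (‖w‖ ^ 2 : 𝕜)) • w, ?_, ?_⟩
    · rw [norm_smul, norm_div, norm_pow, RCLike.norm_ofReal, abs_of_pos hw', pow_two,
        div_mul_eq_mul_div, div_le_iff₀ (by positivity), ← mul_assoc]
      gcongr
    · rw [inner_smul_right, inner_self_eq_norm_sq_to_K,
        div_mul_cancel₀ _ (pow_ne_zero 2 (RCLike.ofReal_ne_zero.mpr hw'.ne'))]

theorem forall_mem_closedBall_le_norm_add_iff {F : Type*} [NormedAddCommGroup F]
    [NormedSpace ℝ F] (z : F) {r t : ℝ} (hr : 0 ≤ r) (ht : 0 < t) :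
    (∀ u ∈ closedBall (0 : F) r, t ≤ ‖z + u‖) ↔ r + t ≤ ‖z‖ := by
  simp only [mem_closedBall_zero_iff]
  constructor
  · intro h
    rcases le_or_gt ‖z‖ r with hzr | hrz
    · have h0 := h (-z) (by rwa [norm_neg])
      rw [add_neg_cancel, norm_zero] at h0
      linarith
    have hz : ‖z‖ ≠ 0 := (hr.trans_lt hrz).ne'
    have hc : r / ‖z‖ ≤ 1 := div_le_one_of_le₀ hrz.le (norm_nonneg z)
    have hworst : ‖z + -(r / ‖z‖) • z‖ = ‖z‖ - r := by
      rw [show z + -(r / ‖z‖) • z = (1 - r / ‖z‖) • z by module, norm_smul,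
        Real.norm_of_nonneg (sub_nonneg.mpr hc), sub_mul, one_mul, div_mul_cancel₀ _ hz]
    have hsmall : ‖-(r / ‖z‖) • z‖ ≤ r := by
      rw [norm_smul, norm_neg, Real.norm_of_nonneg (by positivity), div_mul_cancel₀ _ hz]
    have := h _ hsmall
    linarith
  · intro h u hu
    have := norm_sub_norm_le z (-u)
    rw [sub_neg_eq_add, norm_neg] at this
    linarith

theorem rab_worst_case_constraint_iff_general (N : ℕ)
    (w a : EuclideanSpace ℂ (Fin N)) (ε : ℝ) (hε : 0 ≤ ε) :
    (∀ δ : EuclideanSpace ℂ (Fin N), ‖δ‖ ≤ ε →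
      1 ≤ ‖(inner ℂ w (a + δ) : ℂ)‖) ↔
    ε * ‖w‖ + 1 ≤ ‖(inner ℂ w a : ℂ)‖ := by
  rw [← forall_mem_closedBall_le_norm_add_iff _ (by positivity) one_pos,
    ← image_inner_closedBall w hε, Set.forall_mem_image]
  simp only [mem_closedBall_zero_iff, inner_add_right]

/-- `|w^H (a + δ)| ≥ 1` for every `δ` with `‖δ‖₂ ≤ ε` iff
`|w^H a| ≥ ε‖w‖₂ + 1`. -/
theorem rab_worst_case_constraint_iff (N : ℕ) (hN : 1 ≤ N)
    (w a : EuclideanSpace ℂ (Fin N)) (ε : ℝ) (hε : 0 ≤ ε) :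
    (∀ δ : EuclideanSpace ℂ (Fin N), ‖δ‖ ≤ ε →
      1 ≤ ‖(inner ℂ w (a + δ) : ℂ)‖) ↔
    ε * ‖w‖ + 1 ≤ ‖(inner ℂ w a : ℂ)‖ :=
  rab_worst_case_constraint_iff_general N w a ε hε
end

section
/- (Lemma 2) Let N ≥ 1, let y ∈ ℂ^N, and let ε > 0. There exists x ∈ ℂ^N such that Im[x^H y] = 0 and Re[x^H y] ≥ ε‖x‖₂ + 1 if and only if ‖y‖₂ > ε. Moreover, when ‖y‖₂ > ε, the point x = (1/(‖y‖₂ − ε))·(y/‖y‖₂) satisfies x^H y = ε‖x‖₂ + 1. -/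
/-- Lemma 2: There exists `x` with `Im[x^H y] = 0` and
`Re[x^H y] ≥ ε‖x‖₂ + 1` iff `‖y‖₂ > ε`; moreover when `‖y‖₂ > ε`,
`x = (1/(‖y‖₂ − ε))·(y/‖y‖₂)` satisfies `x^H y = ε‖x‖₂ + 1`. -/
theorem rab_feasibility_iff (N : ℕ) (hN : 1 ≤ N)
    (y : EuclideanSpace ℂ (Fin N)) (ε : ℝ) (hε : 0 < ε) :
    ((∃ x : EuclideanSpace ℂ (Fin N),
        (inner ℂ x y : ℂ).im = 0 ∧ ε * ‖x‖ + 1 ≤ (inner ℂ x y : ℂ).re) ↔ ε < ‖y‖) ∧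
    (ε < ‖y‖ →
      (inner ℂ (((1 / (‖y‖ - ε) : ℝ) • ((‖y‖⁻¹ : ℝ) • y) : EuclideanSpace ℂ (Fin N))) y : ℂ)
        = ((ε * ‖((1 / (‖y‖ - ε) : ℝ) • ((‖y‖⁻¹ : ℝ) • y) : EuclideanSpace ℂ (Fin N))‖ + 1 : ℝ) : ℂ)) := by
  have key : ε < ‖y‖ →
      (inner ℂ (((1 / (‖y‖ - ε) : ℝ) • ((‖y‖⁻¹ : ℝ) • y) : EuclideanSpace ℂ (Fin N))) y : ℂ)
        = ((ε * ‖((1 / (‖y‖ - ε) : ℝ) • ((‖y‖⁻¹ : ℝ) • y) : EuclideanSpace ℂ (Fin N))‖ + 1 : ℝ) : ℂ) := by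
    intro h
    have hy : 0 < ‖y‖ := lt_trans hε h
    have hd : 0 < ‖y‖ - ε := by linarith
    have hinner : (inner ℂ (((1 / (‖y‖ - ε) : ℝ) • ((‖y‖⁻¹ : ℝ) • y) : EuclideanSpace ℂ (Fin N))) y : ℂ)
        = ((1 / (‖y‖ - ε) * (‖y‖⁻¹ * (‖y‖ ^ 2)) : ℝ) : ℂ) := by
      rw [RCLike.real_smul_eq_coe_smul (K := ℂ), RCLike.real_smul_eq_coe_smul (K := ℂ),
        inner_smul_left, inner_smul_left, inner_self_eq_norm_sq_to_K]
      simp only [map_div₀, map_inv₀, map_one, map_sub, Complex.coe_algebraMap, Complex.conj_ofReal]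
      push_cast
      ring
    have hnorm : ‖((1 / (‖y‖ - ε) : ℝ) • ((‖y‖⁻¹ : ℝ) • y) : EuclideanSpace ℂ (Fin N))‖
        = 1 / (‖y‖ - ε) := by
      rw [norm_smul, norm_smul, Real.norm_eq_abs, Real.norm_eq_abs,
        abs_of_pos (by positivity), abs_of_pos (by positivity)]
      field_simp
    rw [hinner, hnorm]
    norm_cast
    field_simp
    ring
  constructor
  · constructor
    · rintro ⟨x, _, hx⟩
      by_contra hle
      push_neg at hle
      have hx0 : x ≠ 0 := by
        intro h0
        simp [h0] at hx
        linarith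
      have hcs : (inner ℂ x y : ℂ).re ≤ ‖x‖ * ‖y‖ := by
        calc (inner ℂ x y : ℂ).re ≤ ‖(inner ℂ x y : ℂ)‖ := Complex.re_le_norm _
          _ ≤ ‖x‖ * ‖y‖ := norm_inner_le_norm x y
      have hxpos : 0 < ‖x‖ := norm_pos_iff.mpr hx0
      nlinarith
    · intro h
      refine ⟨((1 / (‖y‖ - ε) : ℝ) • ((‖y‖⁻¹ : ℝ) • y) : EuclideanSpace ℂ (Fin N)), ?_, ?_⟩
      · rw [key h]; simp
      · rw [key h]; simp
  · exact key
end

section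
/- (Lemma 1, phase alignment) Let N ≥ 1, let λ ∈ ℝ^N with λ_n > 0 for all n, let b ∈ ℂ^N be nonzero, and let ε > 0. Suppose v⋆ ∈ ℂ^N minimizes ∑_{n=1}^N λ_n |v_n|² over the set {v ∈ ℂ^N : Im[v^H b] = 0 and Re[v^H b] ≥ ε‖v‖₂ + 1}. Then for every n, conj(v⋆_n)·b_n is a nonnegative real number; equivalently, v⋆_n = |v⋆_n|·exp(j·arg(b_n)) for every n with b_n ≠ 0, and in particular (v⋆)^H b = ∑_{n=1}^N |v⋆_n|·|b_n|. -/
/-!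
Write `S = ∑ |v_n| |b_n|`, so that `Re[v^H b] ≤ S`, with equality exactly when every
`conj(v_n) b_n` is a nonnegative real. If `Re[v⋆^H b] < S`, rotate each `v⋆_n` onto the phase
of `b_n` and shrink by `t = 1 / (S - ε‖v⋆‖) < 1`: the result satisfies the constraints (the
second one with equality) and has objective `t²` times that of `v⋆ ≠ 0`, contradicting minimality.
-/

open Complex Finset
open scoped ComplexConjugate ComplexOrder

namespace Complex

lemma re_conj_mul_le_norm_mul (z w : ℂ) : (conj z * w).re ≤ ‖z‖ * ‖w‖ := by
  simpa only [norm_mul, norm_conj] using re_le_norm (conj z * w)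

lemma eq_norm_mul_exp_arg_mul_I_of_conj_mul_nonneg {z w : ℂ} (hw : w ≠ 0)
    (h : 0 ≤ conj z * w) : z = ‖z‖ * exp (arg w * I) := by
  rcases eq_or_ne z 0 with rfl | hz
  · simp
  have hzw : conj z * w = (‖z‖ * ‖w‖ : ℝ) := by
    simpa only [norm_mul, norm_conj] using eq_coe_norm_of_nonneg h
  -- multiplying `hzw` by `z` shows that `z` is a positive real multiple of `w`
  have hz_eq : z = (‖z‖ / ‖w‖ : ℝ) * w := by
    have hw' : (‖w‖ : ℂ) ≠ 0 := by simp [hw]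
    have hzw' : (‖z‖ * ‖w‖ : ℂ) ≠ 0 := by simp [hz, hw]
    have hz_mul : z * (‖z‖ * ‖w‖ : ℂ) = (‖z‖ : ℂ) ^ 2 * w := by
      rw [← mul_conj', ← ofReal_mul, ← hzw]; ring
    rw [← mul_left_inj' hzw', hz_mul]
    push_cast
    field_simp
  have harg : arg z = arg w := by
    rw [hz_eq, arg_real_mul w (by positivity)]
  rw [← harg, norm_mul_exp_arg_mul_I]

end Complex

section PhaseAlignment

variable {ι : Type*} [Fintype ι]

lemma EuclideanSpace.inner_eq_sum_conj_mul (v b : EuclideanSpace ℂ ι) :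
    inner ℂ v b = ∑ n, conj (v n) * b n := by
  simp [PiLp.inner_apply, mul_comm]

lemma EuclideanSpace.re_inner_le_sum_norm_mul (v b : EuclideanSpace ℂ ι) :
    (inner ℂ v b).re ≤ ∑ n, ‖v n‖ * ‖b n‖ := by
  rw [EuclideanSpace.inner_eq_sum_conj_mul, re_sum]
  exact sum_le_sum fun n _ => re_conj_mul_le_norm_mul (v n) (b n)

lemma EuclideanSpace.conj_mul_nonneg_of_re_inner_eq_sum_norm_mul {v b : EuclideanSpace ℂ ι}
    (h : (inner ℂ v b).re = ∑ n, ‖v n‖ * ‖b n‖) (n : ι) : 0 ≤ conj (v n) * b n := by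
  rw [EuclideanSpace.inner_eq_sum_conj_mul, re_sum] at h
  rw [← re_eq_norm, norm_mul, norm_conj]
  exact (sum_eq_sum_iff_of_le fun n _ => re_conj_mul_le_norm_mul (v n) (b n)).mp h n (mem_univ n)

noncomputable def phaseAlign (b v : EuclideanSpace ℂ ι) : EuclideanSpace ℂ ι :=
  WithLp.toLp 2 fun n => ‖v n‖ * exp (arg (b n) * I)

omit [Fintype ι] in
lemma norm_phaseAlign_apply (b v : EuclideanSpace ℂ ι) (n : ι) :
    ‖phaseAlign b v n‖ = ‖v n‖ := by
  simp [phaseAlign, norm_exp_ofReal_mul_I]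

lemma norm_phaseAlign (b v : EuclideanSpace ℂ ι) : ‖phaseAlign b v‖ = ‖v‖ := by
  simp only [EuclideanSpace.norm_eq, norm_phaseAlign_apply]

omit [Fintype ι] in
lemma conj_phaseAlign_mul (b v : EuclideanSpace ℂ ι) (n : ι) :
    conj (phaseAlign b v n) * b n = (‖v n‖ * ‖b n‖ : ℝ) := by
  have hunit : conj (exp (arg (b n) * I)) * exp (arg (b n) * I) = 1 := by
    rw [conj_mul', norm_exp_ofReal_mul_I]; simp
  calc conj (phaseAlign b v n) * b n
      = conj (‖v n‖ * exp (arg (b n) * I)) * (‖b n‖ * exp (arg (b n) * I)) := by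
        rw [norm_mul_exp_arg_mul_I]; rfl
    _ = ‖v n‖ * ‖b n‖ * (conj (exp (arg (b n) * I)) * exp (arg (b n) * I)) := by
        rw [map_mul, conj_ofReal]; ring
    _ = (‖v n‖ * ‖b n‖ : ℝ) := by rw [hunit]; push_cast; ring

lemma inner_phaseAlign (b v : EuclideanSpace ℂ ι) :
    inner ℂ (phaseAlign b v) b = (∑ n, ‖v n‖ * ‖b n‖ : ℝ) := by
  simp only [EuclideanSpace.inner_eq_sum_conj_mul, conj_phaseAlign_mul, ofReal_sum]

lemma sum_mul_norm_sq_pos {lam : ι → ℝ} (hlam : ∀ n, 0 < lam n) {v : EuclideanSpace ℂ ι}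
    (hv : v ≠ 0) : 0 < ∑ n, lam n * ‖v n‖ ^ 2 := by
  obtain ⟨n, hn⟩ : ∃ n, v n ≠ 0 := by
    contrapose! hv
    exact PiLp.ext hv
  exact sum_pos' (fun i _ => mul_nonneg (hlam i).le (sq_nonneg _))
    ⟨n, mem_univ n, mul_pos (hlam n) (by positivity)⟩

lemma sum_mul_norm_smul_sq (lam : ι → ℝ) (t : ℝ) (v : EuclideanSpace ℂ ι) :
    ∑ n, lam n * ‖((t : ℂ) • v) n‖ ^ 2 = t ^ 2 * ∑ n, lam n * ‖v n‖ ^ 2 := by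
  rw [mul_sum]
  refine sum_congr rfl fun n _ => ?_
  rw [PiLp.smul_apply, norm_smul, norm_real, Real.norm_eq_abs, mul_pow, sq_abs]
  ring

theorem re_inner_eq_sum_norm_mul_of_isMin (lam : ι → ℝ) (hlam : ∀ n, 0 < lam n)
    (b v : EuclideanSpace ℂ ι) (ε : ℝ) (hfeas : ε * ‖v‖ + 1 ≤ (inner ℂ v b).re)
    (hopt : ∀ w : EuclideanSpace ℂ ι,
      (inner ℂ w b).im = 0 → ε * ‖w‖ + 1 ≤ (inner ℂ w b).re →
      ∑ n, lam n * ‖v n‖ ^ 2 ≤ ∑ n, lam n * ‖w n‖ ^ 2) :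
    (inner ℂ v b).re = ∑ n, ‖v n‖ * ‖b n‖ := by
  set S := ∑ n, ‖v n‖ * ‖b n‖
  refine (EuclideanSpace.re_inner_le_sum_norm_mul v b).antisymm (not_lt.mp fun hlt => ?_)
  have hv : v ≠ 0 := by
    rintro rfl
    norm_num at hfeas
  have hc : 1 < S - ε * ‖v‖ := by linarith
  set t := (S - ε * ‖v‖)⁻¹
  have ht0 : 0 < t := inv_pos.mpr (by linarith)
  have ht1 : t < 1 := inv_lt_one_of_one_lt₀ hc
  have hinner : inner ℂ ((t : ℂ) • phaseAlign b v) b = (t * S : ℝ) := by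
    rw [inner_smul_left, inner_phaseAlign, conj_ofReal, ofReal_mul]
  have hnorm : ‖(t : ℂ) • phaseAlign b v‖ = t * ‖v‖ := by
    rw [norm_smul, norm_real, Real.norm_eq_abs, abs_of_pos ht0, norm_phaseAlign]
  have hwfeas : ε * ‖(t : ℂ) • phaseAlign b v‖ + 1 ≤ (t * S : ℝ) := by
    have : t * (S - ε * ‖v‖) = 1 := inv_mul_cancel₀ (by linarith)
    rw [hnorm]
    linarith
  have hle := hopt _ (by rw [hinner, ofReal_im]) (by rwa [hinner, ofReal_re])
  rw [sum_mul_norm_smul_sq] at hle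
  simp only [norm_phaseAlign_apply] at hle
  have hpos := sum_mul_norm_sq_pos hlam hv
  nlinarith [mul_lt_mul_of_pos_right (pow_lt_one₀ ht0.le ht1 two_ne_zero) hpos]

end PhaseAlignment

theorem rab_phase_alignment_general (N : ℕ)
    (lam : Fin N → ℝ) (hlam : ∀ n, 0 < lam n)
    (b : EuclideanSpace ℂ (Fin N)) (ε : ℝ)
    (vstar : EuclideanSpace ℂ (Fin N))
    (hfeas : (inner ℂ vstar b : ℂ).im = 0 ∧ ε * ‖vstar‖ + 1 ≤ (inner ℂ vstar b : ℂ).re)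
    (hopt : ∀ v : EuclideanSpace ℂ (Fin N),
      (inner ℂ v b : ℂ).im = 0 → ε * ‖v‖ + 1 ≤ (inner ℂ v b : ℂ).re →
      ∑ n, lam n * ‖vstar n‖ ^ 2 ≤ ∑ n, lam n * ‖v n‖ ^ 2) :
    (∀ n, ((starRingEnd ℂ) (vstar n) * b n).im = 0 ∧
          0 ≤ ((starRingEnd ℂ) (vstar n) * b n).re) ∧
    (∀ n, b n ≠ 0 →
      vstar n = (‖vstar n‖ : ℂ) * Complex.exp (((b n).arg : ℂ) * Complex.I)) ∧
    (inner ℂ vstar b : ℂ) = ((∑ n, ‖vstar n‖ * ‖b n‖ : ℝ) : ℂ) := by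
  have hre := re_inner_eq_sum_norm_mul_of_isMin lam hlam b vstar ε hfeas.2 hopt
  have hnonneg := EuclideanSpace.conj_mul_nonneg_of_re_inner_eq_sum_norm_mul hre
  refine ⟨fun n => ?_, fun n hbn => eq_norm_mul_exp_arg_mul_I_of_conj_mul_nonneg hbn (hnonneg n),
    Complex.ext (by rw [hre, ofReal_re]) (by rw [hfeas.1, ofReal_im])⟩
  obtain ⟨hre_n, him_n⟩ := Complex.nonneg_iff.mp (hnonneg n)
  exact ⟨him_n.symm, hre_n⟩

/-- Lemma 1, phase alignment: if `v⋆` minimizes `∑ λ_n |v_n|²`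
over `{v : Im[v^H b] = 0, Re[v^H b] ≥ ε‖v‖₂ + 1}` (with `λ > 0`, `b ≠ 0`, `ε > 0`),
then each `conj(v⋆_n)·b_n` is a nonnegative real, `v⋆_n = |v⋆_n|·exp(j·arg b_n)`
whenever `b_n ≠ 0`, and `(v⋆)^H b = ∑ |v⋆_n|·|b_n|`. -/
theorem rab_phase_alignment (N : ℕ) (hN : 1 ≤ N)
    (lam : Fin N → ℝ) (hlam : ∀ n, 0 < lam n)
    (b : EuclideanSpace ℂ (Fin N)) (hb : b ≠ 0) (ε : ℝ) (hε : 0 < ε)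
    (vstar : EuclideanSpace ℂ (Fin N))
    (hfeas : (inner ℂ vstar b : ℂ).im = 0 ∧ ε * ‖vstar‖ + 1 ≤ (inner ℂ vstar b : ℂ).re)
    (hopt : ∀ v : EuclideanSpace ℂ (Fin N),
      (inner ℂ v b : ℂ).im = 0 → ε * ‖v‖ + 1 ≤ (inner ℂ v b : ℂ).re →
      ∑ n, lam n * ‖vstar n‖ ^ 2 ≤ ∑ n, lam n * ‖v n‖ ^ 2) :
    (∀ n, ((starRingEnd ℂ) (vstar n) * b n).im = 0 ∧
          0 ≤ ((starRingEnd ℂ) (vstar n) * b n).re) ∧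
    (∀ n, b n ≠ 0 →
      vstar n = (‖vstar n‖ : ℂ) * Complex.exp (((b n).arg : ℂ) * Complex.I)) ∧
    (inner ℂ vstar b : ℂ) = ((∑ n, ‖vstar n‖ * ‖b n‖ : ℝ) : ℂ) :=
  rab_phase_alignment_general N lam hlam b ε vstar hfeas hopt
end

section
/- Let λ ∈ ℝ^N with λ_n ≥ 0 for all n, let c ∈ ℝ^N with c_n ≥ 0 for all n, let I₀ = {n : λ_n = 0}, and define f(k) = ∑_{n∈I₀} c_n² + ∑_{n∉I₀} (c_n k / (2λ_n + k))² for k > 0 (so f agrees with ∑_{n=1}^N (c_n k/(2λ_n + k))² on k > 0). Then f(k) → ∑_{n∈I₀} c_n² as k → 0⁺ and f(k) → ∑_{n=1}^N c_n² as k → +∞, and for every ε > 0 with ∑_{n∈I₀} c_n² < ε² < ∑_{n=1}^N c_n², there exists a unique k > 0 such that f(k) = ε². -/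
/-!
Each summand `(c k / (2λ + k))²` with `λ > 0` is continuous on `[0, ∞)`, vanishes at `0`,
increases to `c²` as `k → ∞`, and is strictly increasing as soon as `c ≠ 0`. Adding the constant
contribution of `I₀`, the function `f` is continuous and strictly increasing on `(0, ∞)` (some
`c_n` with `λ_n ≠ 0` is nonzero because `∑_{I₀} c_n² < ∑ c_n²`), so by the intermediate value
theorem it takes every value strictly between its two limits exactly once.
-/

open Filter Set Topology

theorem existsUnique_eq_of_strictMonoOn_Ioi {f : ℝ → ℝ} {a l L y : ℝ}
    (hcont : ContinuousOn f (Ioi a)) (hmono : StrictMonoOn f (Ioi a))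
    (hleft : Tendsto f (𝓝[>] a) (𝓝 l)) (htop : Tendsto f atTop (𝓝 L)) (hl : l < y)
    (hL : y < L) : ∃! k, a < k ∧ f k = y := by
  obtain ⟨k, hk, rfl⟩ := isPreconnected_Ioi.intermediate_value_Ioo (l₁ := 𝓝[>] a) inf_le_right
    (le_principal_iff.2 (Ioi_mem_atTop a)) hcont hleft htop ⟨hl, hL⟩
  exact ⟨k, ⟨hk, rfl⟩, fun k' ⟨hk', he⟩ => hmono.injOn hk' hk he⟩

theorem Finset.strictMonoOn_sum {ι α β : Type*} [Preorder α] [AddCommMonoid β] [PartialOrder β]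
    [IsOrderedCancelAddMonoid β] {s : Finset ι} {f : ι → α → β} {D : Set α}
    (hmono : ∀ i ∈ s, MonotoneOn (f i) D) (hstrict : ∃ i ∈ s, StrictMonoOn (f i) D) :
    StrictMonoOn (fun x => ∑ i ∈ s, f i x) D := by
  intro x hx y hy hxy
  obtain ⟨i, hi, hfi⟩ := hstrict
  exact Finset.sum_lt_sum (fun j hj => hmono j hj hx hy hxy.le) ⟨i, hi, hfi hx hy hxy⟩

theorem strictMonoOn_sq_div_add_left {a : ℝ} (ha : 0 < a) :
    StrictMonoOn (fun k : ℝ => (k / (a + k)) ^ 2) (Ici 0) := by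
  intro x (hx : 0 ≤ x) y (hy : 0 ≤ y) hxy
  have hlt : x / (a + x) < y / (a + y) := by
    rw [div_lt_div_iff₀ (by linarith) (by linarith)]
    nlinarith
  exact pow_lt_pow_left₀ hlt (by positivity) two_ne_zero

theorem tendsto_div_add_left_atTop (a : ℝ) :
    Tendsto (fun k : ℝ => k / (a + k)) atTop (𝓝 1) := by
  have hvanish : Tendsto (fun k : ℝ => a / (a + k)) atTop (𝓝 0) :=
    tendsto_const_nhds.div_atTop (tendsto_atTop_add_const_left _ _ tendsto_id)
  have hlim : Tendsto (fun k : ℝ => 1 - a / (a + k)) atTop (𝓝 1) := by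
    simpa using tendsto_const_nhds.sub hvanish
  refine hlim.congr' ?_
  filter_upwards [eventually_gt_atTop (-a)] with k hk
  have : a + k ≠ 0 := by linarith
  field_simp
  ring

theorem sq_mul_div_add_eq (c a k : ℝ) : (c * k / (a + k)) ^ 2 = c ^ 2 * (k / (a + k)) ^ 2 := by
  ring

section SecularFunction

variable {ι : Type*} {s : Finset ι} {lam : ι → ℝ} (c : ι → ℝ)

theorem continuousOn_secular (hlam : ∀ n ∈ s, 0 < lam n) :
    ContinuousOn (fun k : ℝ => ∑ n ∈ s, (c n * k / (2 * lam n + k)) ^ 2) (Ici 0) := by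
  refine continuousOn_finsetSum _ fun n hn => ?_
  have hden : ∀ k ∈ Ici (0 : ℝ), 2 * lam n + k ≠ 0 := fun k (hk : 0 ≤ k) => by
    linarith [hlam n hn]
  exact ((continuousOn_const.mul continuousOn_id).div
    (continuousOn_const.add continuousOn_id) hden).pow 2

theorem tendsto_secular_atTop :
    Tendsto (fun k : ℝ => ∑ n ∈ s, (c n * k / (2 * lam n + k)) ^ 2) atTop
      (𝓝 (∑ n ∈ s, c n ^ 2)) := by
  refine tendsto_finsetSum _ fun n _ => ?_
  simp_rw [sq_mul_div_add_eq]
  simpa using ((tendsto_div_add_left_atTop (2 * lam n)).pow 2).const_mul (c n ^ 2)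

theorem strictMonoOn_secular (hlam : ∀ n ∈ s, 0 < lam n) (hc : ∃ n ∈ s, c n ≠ 0) :
    StrictMonoOn (fun k : ℝ => ∑ n ∈ s, (c n * k / (2 * lam n + k)) ^ 2) (Ici 0) := by
  simp_rw [sq_mul_div_add_eq]
  obtain ⟨m, hm, hcm⟩ := hc
  refine Finset.strictMonoOn_sum (fun n hn => ?_) ⟨m, hm, ?_⟩
  · intro x hx y hy hxy
    exact mul_le_mul_of_nonneg_left
      ((strictMonoOn_sq_div_add_left (by linarith [hlam n hn])).monotoneOn hx hy hxy) (sq_nonneg _)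
  · intro x hx y hy hxy
    exact mul_lt_mul_of_pos_left
      (strictMonoOn_sq_div_add_left (by linarith [hlam m hm]) hx hy hxy) (by positivity)

end SecularFunction

open Classical in
theorem rab_secular_rank_deficient_general (N : ℕ)
    (lam c : Fin N → ℝ) (hlam : ∀ n, 0 ≤ lam n) :
    Filter.Tendsto
      (fun k : ℝ => (∑ n ∈ Finset.univ.filter (fun n => lam n = 0), (c n) ^ 2) +
        ∑ n ∈ Finset.univ.filter (fun n => lam n ≠ 0), (c n * k / (2 * lam n + k)) ^ 2)
      (nhdsWithin 0 (Set.Ioi 0))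
      (nhds (∑ n ∈ Finset.univ.filter (fun n => lam n = 0), (c n) ^ 2)) ∧
    Filter.Tendsto
      (fun k : ℝ => (∑ n ∈ Finset.univ.filter (fun n => lam n = 0), (c n) ^ 2) +
        ∑ n ∈ Finset.univ.filter (fun n => lam n ≠ 0), (c n * k / (2 * lam n + k)) ^ 2)
      Filter.atTop (nhds (∑ n, (c n) ^ 2)) ∧
    (∀ ε : ℝ, 0 < ε →
      (∑ n ∈ Finset.univ.filter (fun n => lam n = 0), (c n) ^ 2) < ε ^ 2 →
      ε ^ 2 < ∑ n, (c n) ^ 2 →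
      ∃! k : ℝ, 0 < k ∧
        (∑ n ∈ Finset.univ.filter (fun n => lam n = 0), (c n) ^ 2) +
          (∑ n ∈ Finset.univ.filter (fun n => lam n ≠ 0),
            (c n * k / (2 * lam n + k)) ^ 2) = ε ^ 2) := by
  set S₀ := ∑ n ∈ Finset.univ.filter (fun n => lam n = 0), (c n) ^ 2
  set s := Finset.univ.filter (fun n => lam n ≠ 0)
  have hlam_pos : ∀ n ∈ s, 0 < lam n := fun n hn =>
    (hlam n).lt_of_ne' (Finset.mem_filter.1 hn).2
  have hsplit : S₀ + ∑ n ∈ s, c n ^ 2 = ∑ n, c n ^ 2 :=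
    Finset.sum_filter_add_sum_filter_not _ _ _
  have hcont := continuousOn_secular c hlam_pos
  have hleft : Tendsto (fun k : ℝ => S₀ + ∑ n ∈ s, (c n * k / (2 * lam n + k)) ^ 2) (𝓝[>] 0)
      (𝓝 S₀) := by
    simpa using ((hcont 0 self_mem_Ici).mono Ioi_subset_Ici_self).tendsto.const_add S₀
  have htop := hsplit ▸ (tendsto_secular_atTop (s := s) (lam := lam) c).const_add S₀
  refine ⟨hleft, htop, fun ε _ hlow hhigh => ?_⟩
  have hc : ∃ n ∈ s, c n ≠ 0 := by
    obtain ⟨n, hn, hcn⟩ :=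
      Finset.exists_ne_zero_of_sum_ne_zero (by linarith : ∑ n ∈ s, c n ^ 2 ≠ 0)
    exact ⟨n, hn, fun h => hcn (by simp [h])⟩
  exact existsUnique_eq_of_strictMonoOn_Ioi ((hcont.mono Ioi_subset_Ici_self).const_add S₀)
    (((strictMonoOn_secular c hlam_pos hc).mono Ioi_subset_Ici_self).const_add S₀) hleft htop
    hlow hhigh

open Classical in
/-- with `λ ≥ 0`, `c ≥ 0`, `I₀ = {n : λ_n = 0}` and
`f(k) = ∑_{n∈I₀} c_n² + ∑_{n∉I₀} (c_n k/(2λ_n + k))²` for `k > 0`,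
one has `f(k) → ∑_{I₀} c_n²` as `k → 0⁺`, `f(k) → ∑ c_n²` as `k → ∞`, and for
every `ε > 0` with `∑_{I₀} c_n² < ε² < ∑ c_n²` there is a unique `k > 0` with
`f(k) = ε²`. -/
theorem rab_secular_rank_deficient (N : ℕ)
    (lam c : Fin N → ℝ) (hlam : ∀ n, 0 ≤ lam n) (hc : ∀ n, 0 ≤ c n) :
    Filter.Tendsto
      (fun k : ℝ => (∑ n ∈ Finset.univ.filter (fun n => lam n = 0), (c n) ^ 2) +
        ∑ n ∈ Finset.univ.filter (fun n => lam n ≠ 0), (c n * k / (2 * lam n + k)) ^ 2)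
      (nhdsWithin 0 (Set.Ioi 0))
      (nhds (∑ n ∈ Finset.univ.filter (fun n => lam n = 0), (c n) ^ 2)) ∧
    Filter.Tendsto
      (fun k : ℝ => (∑ n ∈ Finset.univ.filter (fun n => lam n = 0), (c n) ^ 2) +
        ∑ n ∈ Finset.univ.filter (fun n => lam n ≠ 0), (c n * k / (2 * lam n + k)) ^ 2)
      Filter.atTop (nhds (∑ n, (c n) ^ 2)) ∧
    (∀ ε : ℝ, 0 < ε →
      (∑ n ∈ Finset.univ.filter (fun n => lam n = 0), (c n) ^ 2) < ε ^ 2 →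
      ε ^ 2 < ∑ n, (c n) ^ 2 →
      ∃! k : ℝ, 0 < k ∧
        (∑ n ∈ Finset.univ.filter (fun n => lam n = 0), (c n) ^ 2) +
          (∑ n ∈ Finset.univ.filter (fun n => lam n ≠ 0),
            (c n * k / (2 * lam n + k)) ^ 2) = ε ^ 2) :=
  rab_secular_rank_deficient_general N lam c hlam
end

section
/- Let λ ∈ ℝ^N with λ_n ≥ 0 for all n, let c ∈ ℝ^N with c_n ≥ 0 for all n, let ε > 0, and let k > 0 satisfy ∑_{n=1}^N (c_n k / (2λ_n + k))² = ε². Suppose ∑_{n=1}^N 2λ_n c_n² / (2λ_n + k)² > 0 and set μ = (∑_{n=1}^N 2λ_n c_n² / (2λ_n + k)²)⁻¹ and u_n = μ c_n / (2λ_n + k) for each n. Then μ > 0, u_n ≥ 0 for all n, ‖u‖₂ = με/k, and the constraint of the reduced RAB problem holds with equality: ∑_{n=1}^N c_n u_n = ε‖u‖₂ + 1. -/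
/-! With `d_n = 2λ_n + k`, all quantities are multiples of `S = ∑ c_n²/d_n²` and
`T = ∑ 2λ_n c_n²/d_n²`: the secular equation says `k² S = ε²`, `‖u‖₂² = μ² S`, and, since
`c_n²/d_n = (k + 2λ_n) c_n²/d_n²`, `∑ c_n u_n = μ (k S + T)`. With `μ T = 1` the constraint
becomes `μ ε²/k + 1 = ε ‖u‖₂ + 1`. -/

open Finset

section SecularSums

variable {ι : Type*} [Fintype ι]

theorem sum_mul_div_sq_eq (c d : ι → ℝ) (a : ℝ) :
    ∑ n, (a * c n / d n) ^ 2 = a ^ 2 * ∑ n, c n ^ 2 / d n ^ 2 := by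
  rw [mul_sum]
  exact sum_congr rfl fun n _ => by ring

theorem sum_sq_div_sq_of_secular {c d : ι → ℝ} {ε k : ℝ} (hk : k ≠ 0)
    (hsec : ∑ n, (c n * k / d n) ^ 2 = ε ^ 2) :
    ∑ n, c n ^ 2 / d n ^ 2 = ε ^ 2 / k ^ 2 := by
  simp only [mul_comm (c _) k, sum_mul_div_sq_eq] at hsec
  rw [← hsec]
  field_simp

theorem sum_mul_mul_div_eq (lam c : ι → ℝ) (μ k : ℝ) :
    ∑ n, c n * (μ * c n / (2 * lam n + k)) =
      μ * (k * ∑ n, c n ^ 2 / (2 * lam n + k) ^ 2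
        + ∑ n, 2 * lam n * c n ^ 2 / (2 * lam n + k) ^ 2) := by
  rw [mul_sum, ← sum_add_distrib, mul_sum]
  refine sum_congr rfl fun n _ => ?_
  -- `d / d² = d⁻¹` holds also for `d = 0`, so no positivity of `d` is needed.
  have hd : (2 * lam n + k) / (2 * lam n + k) ^ 2 = (2 * lam n + k)⁻¹ := by
    rw [sq, div_self_mul_self']
  calc c n * (μ * c n / (2 * lam n + k))
      = μ * c n ^ 2 * ((2 * lam n + k) / (2 * lam n + k) ^ 2) := by rw [hd]; ring
    _ = _ := by ring

end SecularSums

/-- with `λ ≥ 0`, `c ≥ 0`, `ε > 0`, `k > 0` satisfying the secular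
equation, if `∑ 2λ_n c_n²/(2λ_n+k)² > 0` and `μ` is its inverse and
`u_n = μ c_n/(2λ_n + k)`, then `μ > 0`, `u ≥ 0`, `‖u‖₂ = με/k`, and the reduced
RAB constraint holds with equality. -/
theorem rab_kkt_point_feasible (N : ℕ)
    (lam c : Fin N → ℝ) (hlam : ∀ n, 0 ≤ lam n) (hc : ∀ n, 0 ≤ c n)
    (ε k : ℝ) (hε : 0 < ε) (hk : 0 < k)
    (hsec : ∑ n, (c n * k / (2 * lam n + k)) ^ 2 = ε ^ 2)
    (hpos : 0 < ∑ n, 2 * lam n * (c n) ^ 2 / (2 * lam n + k) ^ 2)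
    (μ : ℝ) (hμ : μ = (∑ n, 2 * lam n * (c n) ^ 2 / (2 * lam n + k) ^ 2)⁻¹)
    (u : Fin N → ℝ) (hu : ∀ n, u n = μ * c n / (2 * lam n + k)) :
    0 < μ ∧ (∀ n, 0 ≤ u n) ∧
    Real.sqrt (∑ n, (u n) ^ 2) = μ * ε / k ∧
    ∑ n, c n * u n = ε * Real.sqrt (∑ n, (u n) ^ 2) + 1 := by
  obtain rfl : u = fun n => μ * c n / (2 * lam n + k) := funext hu
  have hμpos : 0 < μ := hμ ▸ inv_pos.mpr hpos
  have hμT : μ * ∑ n, 2 * lam n * c n ^ 2 / (2 * lam n + k) ^ 2 = 1 := by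
    rw [hμ]; exact inv_mul_cancel₀ hpos.ne'
  have hS := sum_sq_div_sq_of_secular hk.ne' hsec
  have hnorm : Real.sqrt (∑ n, (μ * c n / (2 * lam n + k)) ^ 2) = μ * ε / k := by
    rw [sum_mul_div_sq_eq, hS, ← div_pow, ← mul_pow, Real.sqrt_sq (by positivity)]
    ring
  refine ⟨hμpos, fun n => by have := hlam n; have := hc n; positivity, hnorm, ?_⟩
  rw [hnorm, sum_mul_mul_div_eq, mul_add, hμT, hS]
  field_simp
end

section
/- (Closed-form solution, full-rank case) Let λ ∈ ℝ^N with λ_n > 0 for all n, let c ∈ ℝ^N with c_n ≥ 0 for all n and c ≠ 0, and let ε > 0 with ε² < ∑_{n=1}^N c_n². Let k > 0 be the unique solution of ∑_{n=1}^N (c_n k / (2λ_n + k))² = ε², set μ = (∑_{n=1}^N 2λ_n c_n² / (2λ_n + k)²)⁻¹, and define u⋆ ∈ ℝ^N by u⋆_n = μ c_n / (2λ_n + k). Then u⋆ is the unique global minimizer of ∑_{n=1}^N λ_n u_n² over {u ∈ ℝ^N : ∑_{n=1}^N c_n u_n ≥ ε‖u‖₂ + 1}, and u⋆_n ≥ 0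 for all n. -/
/-!
The vector `u⋆` is a KKT point of the convex problem: it satisfies the stationarity condition
`2 λ_n u⋆_n = μ c_n - k u⋆_n`, the constraint is active at `u⋆`, and the secular equation is
exactly the complementary relation `k ‖u⋆‖ = μ ε` between the two multipliers. For a feasible `u`,
expanding `∑ λ_n u_n²` around `u⋆` and bounding `⟨u⋆, u⟩` by Cauchy–Schwarz then gives
`∑ λ_n u_n² ≥ ∑ λ_n u⋆_n² + ∑ λ_n (u_n - u⋆_n)²`, which yields minimality and, since `λ > 0`,
uniqueness.
-/

open Finset

section KKT

variable {ι : Type*} [Fintype ι]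

theorem sum_mul_sq_eq_add_add (lam u v : ι → ℝ) :
    ∑ i, lam i * u i ^ 2 = ∑ i, lam i * v i ^ 2 + ∑ i, lam i * (u i - v i) ^ 2
      + ∑ i, 2 * lam i * v i * (u i - v i) := by
  simp only [← sum_add_distrib]
  exact sum_congr rfl fun i _ => by ring

theorem sum_kkt_mul_sub_nonneg {c u v : ι → ℝ} {ε k μ : ℝ} (hk : 0 ≤ k) (hμ : 0 ≤ μ)
    (hcompl : k * √(∑ i, v i ^ 2) = μ * ε)
    (hactive : ∑ i, c i * v i = ε * √(∑ i, v i ^ 2) + 1)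
    (hu : ε * √(∑ i, u i ^ 2) + 1 ≤ ∑ i, c i * u i) :
    0 ≤ ∑ i, (μ * c i - k * v i) * (u i - v i) := by
  have hexpand : ∑ i, (μ * c i - k * v i) * (u i - v i)
      = μ * ∑ i, c i * u i - μ * ∑ i, c i * v i - k * ∑ i, v i * u i
        + k * ∑ i, v i ^ 2 := by
    simp only [mul_sum, ← sum_sub_distrib, ← sum_add_distrib]
    exact sum_congr rfl fun i _ => by ring
  have hCS : ∑ i, v i * u i ≤ √(∑ i, v i ^ 2) * √(∑ i, u i ^ 2) :=
    Real.sum_mul_le_sqrt_mul_sqrt _ _ _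
  have hsq : √(∑ i, v i ^ 2) ^ 2 = ∑ i, v i ^ 2 :=
    Real.sq_sqrt (sum_nonneg fun i _ => sq_nonneg (v i))
  rw [hexpand, hactive]
  linear_combination mul_le_mul_of_nonneg_left hu hμ + mul_le_mul_of_nonneg_left hCS hk
    + (√(∑ i, u i ^ 2) - √(∑ i, v i ^ 2)) * hcompl + k * hsq

theorem sum_mul_sq_add_sum_mul_sq_sub_le {lam c u v : ι → ℝ} {ε k μ : ℝ} (hk : 0 ≤ k)
    (hμ : 0 ≤ μ) (hstat : ∀ i, 2 * lam i * v i = μ * c i - k * v i)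
    (hcompl : k * √(∑ i, v i ^ 2) = μ * ε)
    (hactive : ∑ i, c i * v i = ε * √(∑ i, v i ^ 2) + 1)
    (hu : ε * √(∑ i, u i ^ 2) + 1 ≤ ∑ i, c i * u i) :
    ∑ i, lam i * v i ^ 2 + ∑ i, lam i * (u i - v i) ^ 2 ≤ ∑ i, lam i * u i ^ 2 := by
  have hfirst := sum_kkt_mul_sub_nonneg hk hμ hcompl hactive hu
  simp only [← hstat] at hfirst
  linarith [sum_mul_sq_eq_add_add lam u v]

theorem sum_mul_eq_of_stationary {lam c v : ι → ℝ} {ε k μ : ℝ} (hμ : μ ≠ 0)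
    (hstat : ∀ i, 2 * lam i * v i = μ * c i - k * v i)
    (hweight : ∑ i, 2 * lam i * v i ^ 2 = μ)
    (hcompl : k * √(∑ i, v i ^ 2) = μ * ε) :
    ∑ i, c i * v i = ε * √(∑ i, v i ^ 2) + 1 := by
  have hsq : √(∑ i, v i ^ 2) * √(∑ i, v i ^ 2) = ∑ i, v i ^ 2 :=
    Real.mul_self_sqrt (sum_nonneg fun i _ => sq_nonneg (v i))
  apply mul_left_cancel₀ hμ
  calc μ * ∑ i, c i * v i = ∑ i, 2 * lam i * v i ^ 2 + k * ∑ i, v i ^ 2 := by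
        simp only [mul_sum, ← sum_add_distrib]
        exact sum_congr rfl fun i _ => by linear_combination -(v i) * hstat i
    _ = μ * (ε * √(∑ i, v i ^ 2) + 1) := by
        rw [hweight]
        linear_combination √(∑ i, v i ^ 2) * hcompl - k * hsq

theorem eq_of_sum_mul_sq_sub_nonpos {lam u v : ι → ℝ} (hlam : ∀ i, 0 < lam i)
    (h : ∑ i, lam i * (u i - v i) ^ 2 ≤ 0) : u = v := by
  have hterm_nonneg : ∀ i ∈ univ, 0 ≤ lam i * (u i - v i) ^ 2 :=
    fun i _ => mul_nonneg (hlam i).le (sq_nonneg _)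
  have hzero := (sum_eq_zero_iff_of_nonneg hterm_nonneg).1 (h.antisymm (sum_nonneg hterm_nonneg))
  funext i
  simpa [sub_eq_zero, (hlam i).ne'] using hzero i (mem_univ i)

end KKT

theorem two_mul_mul_eq_of_eq_div {l c u k μ : ℝ} (h : 2 * l + k ≠ 0)
    (hu : u = μ * c / (2 * l + k)) : 2 * l * u = μ * c - k * u := by
  rw [hu]
  field_simp [h]
  ring

section Secular

variable {ι : Type*} [Fintype ι] {lam c ustar : ι → ℝ} {ε k μ : ℝ}

theorem secular_weight_pos (hlam : ∀ i, 0 < lam i) (hk : 0 ≤ k) (hc0 : c ≠ 0) :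
    0 < ∑ i, 2 * lam i * c i ^ 2 / (2 * lam i + k) ^ 2 := by
  obtain ⟨m, hm⟩ := Function.ne_iff.mp hc0
  refine sum_pos' (fun i _ => by have := hlam i; positivity) ⟨m, mem_univ m, ?_⟩
  have := hlam m
  have : c m ≠ 0 := hm
  positivity

theorem mul_sqrt_sum_sq_eq_of_secular (hk : 0 ≤ k) (hμ : 0 ≤ μ) (hε : 0 ≤ ε)
    (hsec : ∑ i, (c i * k / (2 * lam i + k)) ^ 2 = ε ^ 2)
    (hustar : ∀ i, ustar i = μ * c i / (2 * lam i + k)) :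
    k * √(∑ i, ustar i ^ 2) = μ * ε := by
  have hscaled : ∑ i, (k * ustar i) ^ 2 = (μ * ε) ^ 2 := by
    rw [mul_pow, ← hsec, mul_sum]
    exact sum_congr rfl fun i _ => by rw [hustar i]; ring
  rw [← Real.sqrt_sq (mul_nonneg hμ hε), ← hscaled]
  simp only [mul_pow, ← mul_sum]
  rw [Real.sqrt_mul (sq_nonneg k), Real.sqrt_sq hk]

theorem sum_two_mul_mul_sq_eq_of_eq_inv
    (hweight : ∑ i, 2 * lam i * c i ^ 2 / (2 * lam i + k) ^ 2 ≠ 0)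
    (hμ : μ = (∑ i, 2 * lam i * c i ^ 2 / (2 * lam i + k) ^ 2)⁻¹)
    (hustar : ∀ i, ustar i = μ * c i / (2 * lam i + k)) :
    ∑ i, 2 * lam i * ustar i ^ 2 = μ := by
  calc ∑ i, 2 * lam i * ustar i ^ 2
      = μ * (μ * ∑ i, 2 * lam i * c i ^ 2 / (2 * lam i + k) ^ 2) := by
        rw [mul_sum, mul_sum]
        exact sum_congr rfl fun i _ => by rw [hustar i, div_pow, mul_pow]; ring
    _ = μ := by rw [hμ, inv_mul_cancel₀ hweight, mul_one]

end Secular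

theorem rab_closed_form_full_rank_general (N : ℕ)
    (lam c : Fin N → ℝ) (hlam : ∀ n, 0 < lam n) (hc : ∀ n, 0 ≤ c n) (hc0 : c ≠ 0)
    (ε : ℝ) (hε : 0 < ε)
    (k : ℝ) (hk : 0 < k)
    (hsec : ∑ n, (c n * k / (2 * lam n + k)) ^ 2 = ε ^ 2)
    (μ : ℝ) (hμ : μ = (∑ n, 2 * lam n * (c n) ^ 2 / (2 * lam n + k) ^ 2)⁻¹)
    (ustar : Fin N → ℝ) (hustar : ∀ n, ustar n = μ * c n / (2 * lam n + k)) :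
    (ε * Real.sqrt (∑ n, (ustar n) ^ 2) + 1 ≤ ∑ n, c n * ustar n) ∧
    (∀ u : Fin N → ℝ, ε * Real.sqrt (∑ n, (u n) ^ 2) + 1 ≤ ∑ n, c n * u n →
      ∑ n, lam n * (ustar n) ^ 2 ≤ ∑ n, lam n * (u n) ^ 2) ∧
    (∀ u : Fin N → ℝ, ε * Real.sqrt (∑ n, (u n) ^ 2) + 1 ≤ ∑ n, c n * u n →
      (∀ v : Fin N → ℝ, ε * Real.sqrt (∑ n, (v n) ^ 2) + 1 ≤ ∑ n, c n * v n →
        ∑ n, lam n * (u n) ^ 2 ≤ ∑ n, lam n * (v n) ^ 2) → u = ustar) ∧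
    (∀ n, 0 ≤ ustar n) := by
  have h2lk : ∀ n, 0 < 2 * lam n + k := fun n => by linarith [hlam n]
  have hweight := secular_weight_pos hlam hk.le hc0
  have hμpos : 0 < μ := hμ ▸ inv_pos.2 hweight
  have hstat n := two_mul_mul_eq_of_eq_div (h2lk n).ne' (hustar n)
  have hcompl := mul_sqrt_sum_sq_eq_of_secular hk.le hμpos.le hε.le hsec hustar
  have hactive := sum_mul_eq_of_stationary hμpos.ne' hstat
    (sum_two_mul_mul_sq_eq_of_eq_inv hweight.ne' hμ hustar) hcompl
  have hdescent (u : Fin N → ℝ) (hu : ε * √(∑ n, u n ^ 2) + 1 ≤ ∑ n, c n * u n) :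
      ∑ n, lam n * ustar n ^ 2 + ∑ n, lam n * (u n - ustar n) ^ 2 ≤ ∑ n, lam n * u n ^ 2 :=
    sum_mul_sq_add_sum_mul_sq_sub_le hk.le hμpos.le hstat hcompl hactive hu
  have hgap_nonneg (u : Fin N → ℝ) : 0 ≤ ∑ n, lam n * (u n - ustar n) ^ 2 :=
    sum_nonneg fun n _ => mul_nonneg (hlam n).le (sq_nonneg _)
  refine ⟨hactive.ge, fun u hu => ?_, fun u hu hmin => ?_, fun n => ?_⟩
  · linarith [hdescent u hu, hgap_nonneg u]
  · refine eq_of_sum_mul_sq_sub_nonpos hlam ?_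
    linarith [hdescent u hu, hmin ustar hactive.ge]
  · rw [hustar n]
    exact div_nonneg (mul_nonneg hμpos.le (hc n)) (h2lk n).le

/-- closed-form solution, full-rank case: with `λ > 0`, `c ≥ 0`,
`c ≠ 0`, `0 < ε`, `ε² < ∑ c_n²`, `k > 0` solving the secular equation,
`μ = (∑ 2λ_n c_n²/(2λ_n+k)²)⁻¹` and `u⋆_n = μ c_n/(2λ_n + k)`, the vector `u⋆`
is the unique global minimizer of `∑ λ_n u_n²` over
`{u : ∑ c_n u_n ≥ ε‖u‖₂ + 1}`, and `u⋆ ≥ 0`. -/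
theorem rab_closed_form_full_rank (N : ℕ)
    (lam c : Fin N → ℝ) (hlam : ∀ n, 0 < lam n) (hc : ∀ n, 0 ≤ c n) (hc0 : c ≠ 0)
    (ε : ℝ) (hε : 0 < ε) (hεsum : ε ^ 2 < ∑ n, (c n) ^ 2)
    (k : ℝ) (hk : 0 < k)
    (hsec : ∑ n, (c n * k / (2 * lam n + k)) ^ 2 = ε ^ 2)
    (μ : ℝ) (hμ : μ = (∑ n, 2 * lam n * (c n) ^ 2 / (2 * lam n + k) ^ 2)⁻¹)
    (ustar : Fin N → ℝ) (hustar : ∀ n, ustar n = μ * c n / (2 * lam n + k)) :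
    (ε * Real.sqrt (∑ n, (ustar n) ^ 2) + 1 ≤ ∑ n, c n * ustar n) ∧
    (∀ u : Fin N → ℝ, ε * Real.sqrt (∑ n, (u n) ^ 2) + 1 ≤ ∑ n, c n * u n →
      ∑ n, lam n * (ustar n) ^ 2 ≤ ∑ n, lam n * (u n) ^ 2) ∧
    (∀ u : Fin N → ℝ, ε * Real.sqrt (∑ n, (u n) ^ 2) + 1 ≤ ∑ n, c n * u n →
      (∀ v : Fin N → ℝ, ε * Real.sqrt (∑ n, (v n) ^ 2) + 1 ≤ ∑ n, c n * v n →
        ∑ n, lam n * (u n) ^ 2 ≤ ∑ n, lam n * (v n) ^ 2) → u = ustar) ∧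
    (∀ n, 0 ≤ ustar n) :=
  rab_closed_form_full_rank_general N lam c hlam hc hc0 ε hε k hk hsec μ hμ ustar hustar
end

section
/- (Closed-form solution, rank-deficient case with μ > 0) Let λ ∈ ℝ^N with λ_n ≥ 0 for all n, let I₀ = {n : λ_n = 0}, let c ∈ ℝ^N with c_n ≥ 0 for all n, and let ε > 0 satisfy ∑_{n∈I₀} c_n² < ε² < ∑_{n=1}^N c_n². Let k > 0 be the unique solution of ∑_{n=1}^N (c_n k / (2λ_n + k))² = ε², set μ = (∑_{n=1}^N 2λ_n c_n² / (2λ_n + k)²)⁻¹, and define u⋆ ∈ ℝ^N by u⋆_n = μ c_n / (2λ_n + k). Then u⋆ is the unique global minimizer of ∑_{n=1}^N λ_n u_n² over {u ∈ ℝ^N : ∑_{n=1}^N c_n u_n ≥ ε‖u‖₂ + 1}, and u⋆_n ≥ 0 for all n. -/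
/-!
The closed form is a KKT point of the second-order cone program: with `k = μ ε / ‖u⋆‖`,
stationarity of the Lagrangian `∑ λ_n u_n² - μ (⟨c, u⟩ - ε ‖u‖ - 1)` reads
`(2λ_n + k) u⋆_n = μ c_n`, and the constraint is active at `u⋆`. For such a point the
excess of the objective at any `u` splits exactly into three terms,
`∑ λ_n (u_n - u⋆_n)² + μ · (constraint slack of u) + k · (Cauchy–Schwarz gap of u⋆ and u)`,
all nonnegative on the feasible set. If the excess vanishes, `u` agrees with `u⋆` at an index
where `λ_n > 0` and `u⋆_n > 0` (one exists because `ε² > ∑_{I₀} c_n²`), and `u` is a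
nonnegative multiple of `u⋆`; together these force `u = u⋆`.
-/

open Finset

variable {ι : Type*} [Fintype ι]

lemma norm_toLp_two (a : ι → ℝ) : ‖WithLp.toLp 2 a‖ = √(∑ i, a i ^ 2) := by
  simp [EuclideanSpace.norm_eq]

lemma smul_eq_smul_of_sum_mul_eq_sqrt_mul_sqrt {a b : ι → ℝ}
    (h : ∑ i, a i * b i = √(∑ i, a i ^ 2) * √(∑ i, b i ^ 2)) :
    √(∑ i, b i ^ 2) • a = √(∑ i, a i ^ 2) • b := by
  have hinner : inner ℝ (WithLp.toLp 2 a) (WithLp.toLp 2 b) = ∑ i, a i * b i := by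
    simp [EuclideanSpace.inner_toLp_toLp, dotProduct, mul_comm]
  have := (inner_eq_norm_mul_iff_real (x := WithLp.toLp 2 a) (y := WithLp.toLp 2 b)).1
    (by rw [hinner, h, norm_toLp_two, norm_toLp_two])
  rw [norm_toLp_two, norm_toLp_two] at this
  simpa using congrArg WithLp.ofLp this

structure IsKKTPoint (lam c : ι → ℝ) (ε k μ : ℝ) (ustar : ι → ℝ) : Prop where
  stationary : ∀ n, (2 * lam n + k) * ustar n = μ * c n
  norm_eq : k * √(∑ n, ustar n ^ 2) = μ * ε
  active : ∑ n, c n * ustar n = ε * √(∑ n, ustar n ^ 2) + 1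

namespace IsKKTPoint

variable {lam c ustar : ι → ℝ} {ε k μ : ℝ}

theorem objective_sub_objective_eq (h : IsKKTPoint lam c ε k μ ustar) (u : ι → ℝ) :
    ∑ n, lam n * u n ^ 2 - ∑ n, lam n * ustar n ^ 2 =
      ∑ n, lam n * (u n - ustar n) ^ 2
        + μ * (∑ n, c n * u n - (ε * √(∑ n, u n ^ 2) + 1))
        + k * (√(∑ n, ustar n ^ 2) * √(∑ n, u n ^ 2) - ∑ n, ustar n * u n) := by
  have hexpand : ∑ n, lam n * u n ^ 2 - ∑ n, lam n * ustar n ^ 2 =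
      ∑ n, lam n * (u n - ustar n) ^ 2 + μ * ∑ n, c n * u n - k * ∑ n, ustar n * u n
        - 2 * ∑ n, lam n * ustar n ^ 2 := by
    simp only [mul_sum, ← sum_sub_distrib, ← sum_add_distrib]
    exact sum_congr rfl fun n _ => by linear_combination u n * h.stationary n
  have hself : 2 * ∑ n, lam n * ustar n ^ 2 =
      μ * ∑ n, c n * ustar n - k * ∑ n, ustar n ^ 2 := by
    simp only [mul_sum, ← sum_sub_distrib]
    exact sum_congr rfl fun n _ => by linear_combination ustar n * h.stationary n
  have hsq : ∑ n, ustar n ^ 2 = √(∑ n, ustar n ^ 2) ^ 2 :=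
    (Real.sq_sqrt (sum_nonneg fun n _ => sq_nonneg _)).symm
  linear_combination hexpand - hself - μ * h.active + k * hsq
    - (√(∑ n, u n ^ 2) - √(∑ n, ustar n ^ 2)) * h.norm_eq

theorem objective_le (h : IsKKTPoint lam c ε k μ ustar) (hlam : ∀ n, 0 ≤ lam n)
    (hμ : 0 ≤ μ) (hk : 0 ≤ k) {u : ι → ℝ}
    (hu : ε * √(∑ n, u n ^ 2) + 1 ≤ ∑ n, c n * u n) :
    ∑ n, lam n * ustar n ^ 2 ≤ ∑ n, lam n * u n ^ 2 := by
  have hdist : 0 ≤ ∑ n, lam n * (u n - ustar n) ^ 2 :=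
    sum_nonneg fun n _ => mul_nonneg (hlam n) (sq_nonneg _)
  have hslack := mul_nonneg hμ (sub_nonneg.2 hu)
  have hgap := mul_nonneg hk (sub_nonneg.2 (Real.sum_mul_le_sqrt_mul_sqrt univ ustar u))
  linarith [h.objective_sub_objective_eq u]

theorem eq_of_objective_le (h : IsKKTPoint lam c ε k μ ustar) (hlam : ∀ n, 0 ≤ lam n)
    (hμ : 0 ≤ μ) (hk : 0 < k) {n₀ : ι} (hlam₀ : 0 < lam n₀) (hustar₀ : ustar n₀ ≠ 0)
    {u : ι → ℝ} (hu : ε * √(∑ n, u n ^ 2) + 1 ≤ ∑ n, c n * u n)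
    (hle : ∑ n, lam n * u n ^ 2 ≤ ∑ n, lam n * ustar n ^ 2) : u = ustar := by
  set s := √(∑ n, ustar n ^ 2)
  set Q := √(∑ n, u n ^ 2)
  have hterm_nonneg : ∀ n ∈ univ, 0 ≤ lam n * (u n - ustar n) ^ 2 :=
    fun n _ => mul_nonneg (hlam n) (sq_nonneg _)
  have hslack := mul_nonneg hμ (sub_nonneg.2 hu)
  have hcs := Real.sum_mul_le_sqrt_mul_sqrt univ ustar u
  have hgap := mul_nonneg hk.le (sub_nonneg.2 hcs)
  have hidentity := h.objective_sub_objective_eq u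
  have hdist : ∑ n, lam n * (u n - ustar n) ^ 2 = 0 := by
    linarith [sum_nonneg hterm_nonneg]
  have hgap_zero : k * (s * Q - ∑ n, ustar n * u n) = 0 := by
    linarith [sum_nonneg hterm_nonneg]
  have hcs_eq : ∑ n, ustar n * u n = s * Q :=
    (sub_eq_zero.1 ((mul_eq_zero.1 hgap_zero).resolve_left hk.ne')).symm
  have hu₀ : u n₀ = ustar n₀ := by
    have := (sum_eq_zero_iff_of_nonneg hterm_nonneg).1 hdist n₀ (mem_univ _)
    simpa [hlam₀.ne', sub_eq_zero] using this
  have hprop : Q • ustar = s • u := smul_eq_smul_of_sum_mul_eq_sqrt_mul_sqrt hcs_eq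
  have hQs : Q = s := by
    have := congrFun hprop n₀
    simp only [Pi.smul_apply, smul_eq_mul, hu₀] at this
    exact mul_right_cancel₀ hustar₀ this
  have hs : s ≠ 0 := by
    refine (Real.sqrt_pos.2 ?_).ne'
    exact lt_of_lt_of_le (by positivity) (single_le_sum (fun n _ => sq_nonneg (ustar n))
      (mem_univ n₀))
  rw [hQs] at hprop
  exact (smul_right_injective _ hs hprop).symm

end IsKKTPoint

theorem exists_lam_pos_and_c_pos {lam c : ι → ℝ} {k : ℝ} (hlam : ∀ n, 0 ≤ lam n)
    (hc : ∀ n, 0 ≤ c n) (hk : k ≠ 0)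
    (hlow : ∑ n ∈ univ.filter (fun n => lam n = 0), c n ^ 2
      < ∑ n, (c n * k / (2 * lam n + k)) ^ 2) :
    ∃ n, 0 < lam n ∧ 0 < c n := by
  by_contra! hzero
  rw [sum_filter] at hlow
  refine hlow.ne (sum_congr rfl fun n _ => ?_)
  by_cases hn : lam n = 0
  · simp [hn, hk]
  · simp [hn, le_antisymm (hzero n ((hlam n).lt_of_ne' hn)) (hc n)]

theorem isKKTPoint_of_secular {lam c ustar : ι → ℝ} {ε k μ : ℝ} (hlam : ∀ n, 0 ≤ lam n)
    (hε : 0 ≤ ε) (hk : 0 < k) (hμ : 0 ≤ μ)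
    (hsec : ∑ n, (c n * k / (2 * lam n + k)) ^ 2 = ε ^ 2)
    (hμA : μ * ∑ n, 2 * lam n * c n ^ 2 / (2 * lam n + k) ^ 2 = 1)
    (hustar : ∀ n, ustar n = μ * c n / (2 * lam n + k)) :
    IsKKTPoint lam c ε k μ ustar := by
  have hd : ∀ n, 2 * lam n + k ≠ 0 := fun n => by linarith [hlam n]
  have hsqrt : √(∑ n, ustar n ^ 2) = μ * ε / k := by
    have hsq : ∑ n, ustar n ^ 2 = (μ / k) ^ 2 * ∑ n, (c n * k / (2 * lam n + k)) ^ 2 := by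
      rw [mul_sum]
      exact sum_congr rfl fun n _ => by rw [hustar n]; field_simp [hd n]
    rw [hsq, hsec, ← mul_pow, Real.sqrt_sq (by positivity)]
    ring
  refine ⟨fun n => by rw [hustar n]; field_simp [hd n], ?_, ?_⟩
  · rw [hsqrt]; field_simp
  · have hsplit : ∀ n, c n * ustar n = μ * (2 * lam n * c n ^ 2 / (2 * lam n + k) ^ 2)
        + μ / k * (c n * k / (2 * lam n + k)) ^ 2 := fun n => by
      rw [hustar n]; field_simp [hd n]
    rw [sum_congr rfl fun n _ => hsplit n, sum_add_distrib, ← mul_sum, ← mul_sum, hμA, hsec,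
      hsqrt]
    ring

open Classical in
theorem rab_closed_form_rank_deficient_general (N : ℕ)
    (lam c : Fin N → ℝ) (hlam : ∀ n, 0 ≤ lam n) (hc : ∀ n, 0 ≤ c n)
    (ε : ℝ) (hε : 0 < ε)
    (hlow : (∑ n ∈ Finset.univ.filter (fun n => lam n = 0), (c n) ^ 2) < ε ^ 2)
    (k : ℝ) (hk : 0 < k)
    (hsec : ∑ n, (c n * k / (2 * lam n + k)) ^ 2 = ε ^ 2)
    (μ : ℝ) (hμ : μ = (∑ n, 2 * lam n * (c n) ^ 2 / (2 * lam n + k) ^ 2)⁻¹)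
    (ustar : Fin N → ℝ) (hustar : ∀ n, ustar n = μ * c n / (2 * lam n + k)) :
    (ε * Real.sqrt (∑ n, (ustar n) ^ 2) + 1 ≤ ∑ n, c n * ustar n) ∧
    (∀ u : Fin N → ℝ, ε * Real.sqrt (∑ n, (u n) ^ 2) + 1 ≤ ∑ n, c n * u n →
      ∑ n, lam n * (ustar n) ^ 2 ≤ ∑ n, lam n * (u n) ^ 2) ∧
    (∀ u : Fin N → ℝ, ε * Real.sqrt (∑ n, (u n) ^ 2) + 1 ≤ ∑ n, c n * u n →
      (∀ v : Fin N → ℝ, ε * Real.sqrt (∑ n, (v n) ^ 2) + 1 ≤ ∑ n, c n * v n →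
        ∑ n, lam n * (u n) ^ 2 ≤ ∑ n, lam n * (v n) ^ 2) → u = ustar) ∧
    (∀ n, 0 ≤ ustar n) := by
  have hd : ∀ n, 0 < 2 * lam n + k := fun n => by linarith [hlam n]
  obtain ⟨n₀, hlam₀, hc₀⟩ := exists_lam_pos_and_c_pos hlam hc hk.ne' (hsec ▸ hlow)
  have hA : 0 < ∑ n, 2 * lam n * c n ^ 2 / (2 * lam n + k) ^ 2 :=
    sum_pos' (fun n _ => by have := hlam n; positivity) ⟨n₀, mem_univ _, by positivity⟩
  have hμ₀ : 0 < μ := hμ ▸ inv_pos.2 hA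
  have hkkt : IsKKTPoint lam c ε k μ ustar :=
    isKKTPoint_of_secular hlam hε.le hk hμ₀.le hsec (hμ ▸ inv_mul_cancel₀ hA.ne') hustar
  have hustar₀ : ustar n₀ ≠ 0 := by rw [hustar n₀]; have := hd n₀; positivity
  refine ⟨hkkt.active.ge, fun u hu => hkkt.objective_le hlam hμ₀.le hk.le hu,
    fun u hu hmin => hkkt.eq_of_objective_le hlam hμ₀.le hk hlam₀ hustar₀ hu
      (hmin ustar hkkt.active.ge), fun n => ?_⟩
  rw [hustar n]
  have := hc n
  have := hd n
  positivity

open Classical in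
/-- closed-form solution, rank-deficient case with μ > 0: with
`λ ≥ 0`, `I₀ = {n : λ_n = 0}`, `c ≥ 0`, `0 < ε`,
`∑_{I₀} c_n² < ε² < ∑ c_n²`, `k > 0` solving the secular equation,
`μ = (∑ 2λ_n c_n²/(2λ_n+k)²)⁻¹` and `u⋆_n = μ c_n/(2λ_n + k)`, the vector `u⋆`
is the unique global minimizer of `∑ λ_n u_n²` over
`{u : ∑ c_n u_n ≥ ε‖u‖₂ + 1}`, and `u⋆ ≥ 0`. -/
theorem rab_closed_form_rank_deficient (N : ℕ)
    (lam c : Fin N → ℝ) (hlam : ∀ n, 0 ≤ lam n) (hc : ∀ n, 0 ≤ c n)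
    (ε : ℝ) (hε : 0 < ε)
    (hlow : (∑ n ∈ Finset.univ.filter (fun n => lam n = 0), (c n) ^ 2) < ε ^ 2)
    (hhigh : ε ^ 2 < ∑ n, (c n) ^ 2)
    (k : ℝ) (hk : 0 < k)
    (hsec : ∑ n, (c n * k / (2 * lam n + k)) ^ 2 = ε ^ 2)
    (μ : ℝ) (hμ : μ = (∑ n, 2 * lam n * (c n) ^ 2 / (2 * lam n + k) ^ 2)⁻¹)
    (ustar : Fin N → ℝ) (hustar : ∀ n, ustar n = μ * c n / (2 * lam n + k)) :
    (ε * Real.sqrt (∑ n, (ustar n) ^ 2) + 1 ≤ ∑ n, c n * ustar n) ∧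
    (∀ u : Fin N → ℝ, ε * Real.sqrt (∑ n, (u n) ^ 2) + 1 ≤ ∑ n, c n * u n →
      ∑ n, lam n * (ustar n) ^ 2 ≤ ∑ n, lam n * (u n) ^ 2) ∧
    (∀ u : Fin N → ℝ, ε * Real.sqrt (∑ n, (u n) ^ 2) + 1 ≤ ∑ n, c n * u n →
      (∀ v : Fin N → ℝ, ε * Real.sqrt (∑ n, (v n) ^ 2) + 1 ≤ ∑ n, c n * v n →
        ∑ n, lam n * (u n) ^ 2 ≤ ∑ n, lam n * (v n) ^ 2) → u = ustar) ∧
    (∀ n, 0 ≤ ustar n) :=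
  rab_closed_form_rank_deficient_general N lam c hlam hc ε hε hlow k hk hsec μ hμ ustar hustar
end

section
/- (Rank-deficient case with μ = 0) Let λ ∈ ℝ^N with λ_n ≥ 0 for all n, let I₀ = {n : λ_n = 0}, let c ∈ ℝ^N with c_n ≥ 0 for all n, and let ε > 0 satisfy ∑_{n∈I₀} c_n² > ε². Then the minimum value of ∑_{n=1}^N λ_n u_n² over {u ∈ ℝ^N : u ≥ 0, ∑_{n=1}^N c_n u_n ≥ ε‖u‖₂ + 1} equals 0, and the set of minimizers is exactly {u ∈ ℝ^N : u ≥ 0, u_n = 0 for all n ∉ I₀, and ∑_{n∈I₀} c_n u_n ≥ ε·√(∑_{n∈I₀} u_n²) + 1}. In particular, the point u⋆ with u⋆_n = c_n / (∑_{n∈I₀} c_n² − ε·√(∑_{n∈I₀} c_n²)) for n ∈ I₀ and u⋆_n = 0 for n ∉ I₀ is a minimizer. -/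
open Classical in
/-- rank-deficient case with μ = 0: with `λ ≥ 0`,
`I₀ = {n : λ_n = 0}`, `c ≥ 0`, `0 < ε` and `∑_{I₀} c_n² > ε²`, the minimum of
`∑ λ_n u_n²` over `{u ≥ 0 : ∑ c_n u_n ≥ ε‖u‖₂ + 1}` equals `0`, the minimizer
set is exactly `{u ≥ 0 : u_n = 0 for n ∉ I₀, ∑_{I₀} c_n u_n ≥ ε√(∑_{I₀} u_n²) + 1}`,
and `u⋆` with `u⋆_n = c_n/(∑_{I₀} c_n² − ε√(∑_{I₀} c_n²))` on `I₀` and `0`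
elsewhere is a minimizer. -/
theorem rab_rank_deficient_zero_multiplier (N : ℕ)
    (lam c : Fin N → ℝ) (hlam : ∀ n, 0 ≤ lam n) (hc : ∀ n, 0 ≤ c n)
    (ε : ℝ) (hε : 0 < ε)
    (hbig : ε ^ 2 < ∑ n ∈ Finset.univ.filter (fun n => lam n = 0), (c n) ^ 2) :
    IsLeast ((fun u : Fin N → ℝ => ∑ n, lam n * (u n) ^ 2) ''
      {u | (∀ n, 0 ≤ u n) ∧ ε * Real.sqrt (∑ n, (u n) ^ 2) + 1 ≤ ∑ n, c n * u n}) 0 ∧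
    {u : Fin N → ℝ |
        ((∀ n, 0 ≤ u n) ∧ ε * Real.sqrt (∑ n, (u n) ^ 2) + 1 ≤ ∑ n, c n * u n) ∧
        ∑ n, lam n * (u n) ^ 2 = 0}
      = {u : Fin N → ℝ | (∀ n, 0 ≤ u n) ∧ (∀ n, lam n ≠ 0 → u n = 0) ∧
          ε * Real.sqrt (∑ n ∈ Finset.univ.filter (fun n => lam n = 0), (u n) ^ 2) + 1
            ≤ ∑ n ∈ Finset.univ.filter (fun n => lam n = 0), c n * u n} ∧
    ((fun n => if lam n = 0 then
        c n / ((∑ m ∈ Finset.univ.filter (fun m => lam m = 0), (c m) ^ 2)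
          - ε * Real.sqrt (∑ m ∈ Finset.univ.filter (fun m => lam m = 0), (c m) ^ 2))
      else 0) ∈
      {u : Fin N → ℝ |
        ((∀ n, 0 ≤ u n) ∧ ε * Real.sqrt (∑ n, (u n) ^ 2) + 1 ≤ ∑ n, c n * u n) ∧
        ∑ n, lam n * (u n) ^ 2 = 0}) := by
  set F := Finset.univ.filter (fun n : Fin N => lam n = 0) with hF
  set S := ∑ n ∈ F, (c n) ^ 2 with hSdef
  have hS : 0 < S := lt_trans (by positivity) hbig
  set s := Real.sqrt S with hsdef
  have hs2 : s ^ 2 = S := Real.sq_sqrt hS.le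
  have hs0 : 0 < s := Real.sqrt_pos.mpr hS
  have hεs : ε < s := (Real.lt_sqrt hε.le).mpr hbig
  set D := S - ε * s with hDdef
  have hD : 0 < D := by
    have : D = s * (s - ε) := by rw [hDdef, ← hs2]; ring
    rw [this]; exact mul_pos hs0 (by linarith)
  set ustar : Fin N → ℝ := fun n => if lam n = 0 then c n / D else 0 with hustar
  -- basic sum computations for ustar
  have hsum_c : ∑ n, c n * ustar n = S / D := by
    rw [hSdef, Finset.sum_div, hF, Finset.sum_filter]
    apply Finset.sum_congr rfl
    intro n _
    by_cases h : lam n = 0 <;> simp [hustar, h, sq, mul_div_assoc]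
  have hsum_sq : ∑ n, (ustar n) ^ 2 = S / D ^ 2 := by
    rw [hSdef, Finset.sum_div, hF, Finset.sum_filter]
    apply Finset.sum_congr rfl
    intro n _
    by_cases h : lam n = 0 <;> simp [hustar, h, div_pow]
  have hsum_lam : ∑ n, lam n * (ustar n) ^ 2 = 0 := by
    apply Finset.sum_eq_zero
    intro n _
    by_cases h : lam n = 0 <;> simp [hustar, h]
  have hstar_mem : ((∀ n, 0 ≤ ustar n) ∧
      ε * Real.sqrt (∑ n, (ustar n) ^ 2) + 1 ≤ ∑ n, c n * ustar n) ∧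
      ∑ n, lam n * (ustar n) ^ 2 = 0 := by
    refine ⟨⟨?_, ?_⟩, hsum_lam⟩
    · intro n
      by_cases h : lam n = 0 <;> simp [hustar, h]
      exact div_nonneg (hc n) hD.le
    · rw [hsum_c, hsum_sq]
      have hsqrt : Real.sqrt (S / D ^ 2) = s / D := by
        have h : S / D ^ 2 = (s / D) ^ 2 := by rw [div_pow, hs2]
        rw [h, Real.sqrt_sq (by positivity)]
      rw [hsqrt]
      have hEq : ε * (s / D) + 1 = S / D := by
        field_simp
        rw [hDdef]
        ring
      rw [hEq]
  constructor
  · constructor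
    · exact ⟨ustar, ⟨hstar_mem.1.1, hstar_mem.1.2⟩, hstar_mem.2⟩
    · rintro x ⟨u, _, rfl⟩
      exact Finset.sum_nonneg fun n _ => mul_nonneg (hlam n) (sq_nonneg _)
  constructor
  · ext u
    simp only [Set.mem_setOf_eq]
    constructor
    · rintro ⟨⟨hpos, hcon⟩, hzero⟩
      have hterm : ∀ n ∈ Finset.univ, lam n * (u n) ^ 2 = 0 :=
        (Finset.sum_eq_zero_iff_of_nonneg
          (fun n _ => mul_nonneg (hlam n) (sq_nonneg _))).mp hzero
      have huz : ∀ n, lam n ≠ 0 → u n = 0 := by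
        intro n hn
        have := hterm n (Finset.mem_univ n)
        have : (u n) ^ 2 = 0 := by
          rcases mul_eq_zero.mp this with h | h
          · exact absurd h hn
          · exact h
        exact pow_eq_zero_iff (n := 2) (by norm_num) |>.mp this
      have h1 : ∑ n ∈ F, (u n) ^ 2 = ∑ n, (u n) ^ 2 := by
        apply Finset.sum_subset (Finset.subset_univ _)
        intro n _ hn
        rw [hF, Finset.mem_filter] at hn
        push_neg at hn
        rw [huz n (hn (Finset.mem_univ n))]; ring
      have h2 : ∑ n ∈ F, c n * u n = ∑ n, c n * u n := by
        apply Finset.sum_subset (Finset.subset_univ _)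
        intro n _ hn
        rw [hF, Finset.mem_filter] at hn
        push_neg at hn
        rw [huz n (hn (Finset.mem_univ n))]; ring
      exact ⟨hpos, huz, by rw [h1, h2]; exact hcon⟩
    · rintro ⟨hpos, huz, hcon⟩
      have h1 : ∑ n ∈ F, (u n) ^ 2 = ∑ n, (u n) ^ 2 := by
        apply Finset.sum_subset (Finset.subset_univ _)
        intro n _ hn
        rw [hF, Finset.mem_filter] at hn
        push_neg at hn
        rw [huz n (hn (Finset.mem_univ n))]; ring
      have h2 : ∑ n ∈ F, c n * u n = ∑ n, c n * u n := by
        apply Finset.sum_subset (Finset.subset_univ _)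
        intro n _ hn
        rw [hF, Finset.mem_filter] at hn
        push_neg at hn
        rw [huz n (hn (Finset.mem_univ n))]; ring
      refine ⟨⟨hpos, by rw [← h1, ← h2]; exact hcon⟩, ?_⟩
      apply Finset.sum_eq_zero
      intro n _
      by_cases h : lam n = 0
      · rw [h]; ring
      · rw [huz n h]; ring
  · exact hstar_mem
end

section
/- (Non-uniqueness in the rank-deficient case with μ = 0) Let λ ∈ ℝ^N with λ_n ≥ 0, let I₀ = {n : λ_n = 0}, let c ∈ ℝ^N with c_n ≥ 0, and let ε > 0 satisfy ∑_{n∈I₀} c_n² > ε². If u⋆ ∈ ℝ^N is a global minimizer of ∑_{n=1}^N λ_n u_n² over {u ∈ ℝ^N : u ≥ 0, ∑_{n=1}^N c_n u_n ≥ ε‖u‖₂ + 1}, then for every t > 1 the vector t·u⋆ is also a global minimizer; in particular the minimizer is not unique. -/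
/-!
The objective `∑ λ_n u_n²` is 2-homogeneous, while the feasible set is stable under scaling by
any `t ≥ 1`. The hypothesis `∑_{I₀} c_n² > ε²` produces a feasible point supported on `I₀`, where
the objective vanishes; hence the optimal value is `≤ 0`, and scaling a minimizer by `t ≥ 1`
multiplies its value by `t² ≥ 1`, which cannot increase a nonpositive number.
-/

open Finset

variable {ι : Type*} [Fintype ι]

def rabObjective (lam u : ι → ℝ) : ℝ := ∑ n, lam n * u n ^ 2

def rabFeasibleSet (c : ι → ℝ) (ε : ℝ) : Set (ι → ℝ) :=
  {u | (∀ n, 0 ≤ u n) ∧ ε * √(∑ n, u n ^ 2) + 1 ≤ ∑ n, c n * u n}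

lemma rabObjective_smul (lam u : ι → ℝ) (t : ℝ) :
    rabObjective lam (t • u) = t ^ 2 * rabObjective lam u := by
  simp only [rabObjective, Pi.smul_apply, smul_eq_mul, mul_sum]
  exact sum_congr rfl fun n _ => by ring

lemma rabObjective_eq_zero_of_support_subset {lam v : ι → ℝ} {s : Finset ι}
    (hlam : ∀ n ∈ s, lam n = 0) (hv : ∀ n ∉ s, v n = 0) : rabObjective lam v = 0 :=
  sum_eq_zero fun n _ => by
    by_cases hn : n ∈ s
    · simp [hlam n hn]
    · simp [hv n hn]

lemma ne_zero_of_mem_rabFeasibleSet {c u : ι → ℝ} {ε : ℝ} (hu : u ∈ rabFeasibleSet c ε) :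
    u ≠ 0 := by
  rintro rfl
  have := hu.2
  norm_num at this

lemma smul_mem_rabFeasibleSet {c u : ι → ℝ} {ε t : ℝ} (hu : u ∈ rabFeasibleSet c ε)
    (ht : 1 ≤ t) : t • u ∈ rabFeasibleSet c ε := by
  have ht0 : 0 ≤ t := zero_le_one.trans ht
  have hnorm : √(∑ n, (t • u) n ^ 2) = t * √(∑ n, u n ^ 2) := by
    simp only [Pi.smul_apply, smul_eq_mul, mul_pow, ← mul_sum]
    rw [Real.sqrt_mul (sq_nonneg t), Real.sqrt_sq ht0]
  have hlin : ∑ n, c n * (t • u) n = t * ∑ n, c n * u n := by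
    simp only [Pi.smul_apply, smul_eq_mul, mul_sum]
    exact sum_congr rfl fun n _ => by ring
  refine ⟨fun n => mul_nonneg ht0 (hu.1 n), ?_⟩
  rw [hnorm, hlin]
  nlinarith [hu.2]

/-- The witness is `c` restricted to `s`, scaled by `(r (r - ε))⁻¹` where `r² = ∑_{n ∈ s} c_n²`;
it satisfies the constraint with equality. -/
lemma exists_mem_rabFeasibleSet_of_sq_lt_sum {c : ι → ℝ} {ε : ℝ} {s : Finset ι}
    (hc : ∀ n ∈ s, 0 ≤ c n) (hbig : ε ^ 2 < ∑ n ∈ s, c n ^ 2) :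
    ∃ v ∈ rabFeasibleSet c ε, ∀ n ∉ s, v n = 0 := by
  classical
  set r := √(∑ n ∈ s, c n ^ 2)
  have hεr : ε < r := Real.lt_sqrt_of_sq_lt hbig
  have hr : 0 < r := Real.sqrt_pos.2 ((sq_nonneg ε).trans_lt hbig)
  have hr2 : ∑ n ∈ s, c n ^ 2 = r ^ 2 := (Real.sq_sqrt ((sq_nonneg ε).trans hbig.le)).symm
  set a := (r * (r - ε))⁻¹
  have ha : 0 < a := inv_pos.2 (mul_pos hr (sub_pos.2 hεr))
  have har : a * (r * (r - ε)) = 1 := inv_mul_cancel₀ (mul_pos hr (sub_pos.2 hεr)).ne'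
  set v : ι → ℝ := fun n => if n ∈ s then a * c n else 0
  have hsq : ∑ n, v n ^ 2 = (a * r) ^ 2 := by
    have : ∀ n, v n ^ 2 = if n ∈ s then a ^ 2 * c n ^ 2 else 0 := fun n => by
      simp only [v]; split_ifs <;> ring
    simp only [this, sum_ite_mem, univ_inter, ← mul_sum, hr2]
    ring
  have hlin : ∑ n, c n * v n = a * r ^ 2 := by
    have : ∀ n, c n * v n = if n ∈ s then a * c n ^ 2 else 0 := fun n => by
      simp only [v]; split_ifs <;> ring
    simp only [this, sum_ite_mem, univ_inter, ← mul_sum, hr2]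
  refine ⟨v, ⟨fun n => ?_, ?_⟩, fun n hn => if_neg hn⟩
  · simp only [v]
    split_ifs with hn
    exacts [mul_nonneg ha.le (hc n hn), le_rfl]
  · rw [hsq, hlin, Real.sqrt_sq (mul_pos ha hr).le]
    exact le_of_eq (by linear_combination -har)

lemma IsMinOn.smul_of_nonpos {E : Type*} [SMul ℝ E] {f : E → ℝ} {s : Set E} {a : E} {t : ℝ}
    (ha : IsMinOn f s a) (hfa : f a ≤ 0) (ht : 1 ≤ t) (hf : f (t • a) = t ^ 2 * f a) :
    IsMinOn f s (t • a) :=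
  isMinOn_iff.2 fun x hx => calc
    f (t • a) = t ^ 2 * f a := hf
    _ ≤ f a := mul_le_of_one_le_left hfa (one_le_pow₀ ht)
    _ ≤ f x := isMinOn_iff.1 ha x hx

open Classical in
theorem rab_nonuniqueness_zero_multiplier_general (N : ℕ)
    (lam c : Fin N → ℝ) (hc : ∀ n, 0 ≤ c n)
    (ε : ℝ)
    (hbig : ε ^ 2 < ∑ n ∈ Finset.univ.filter (fun n => lam n = 0), (c n) ^ 2)
    (ustar : Fin N → ℝ)
    (hfeas : (∀ n, 0 ≤ ustar n) ∧
      ε * Real.sqrt (∑ n, (ustar n) ^ 2) + 1 ≤ ∑ n, c n * ustar n)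
    (hopt : ∀ u : Fin N → ℝ,
      (∀ n, 0 ≤ u n) → ε * Real.sqrt (∑ n, (u n) ^ 2) + 1 ≤ ∑ n, c n * u n →
      ∑ n, lam n * (ustar n) ^ 2 ≤ ∑ n, lam n * (u n) ^ 2) :
    (∀ t : ℝ, 1 < t →
      ((∀ n, 0 ≤ t * ustar n) ∧
        ε * Real.sqrt (∑ n, (t * ustar n) ^ 2) + 1 ≤ ∑ n, c n * (t * ustar n)) ∧
      (∀ u : Fin N → ℝ,
        (∀ n, 0 ≤ u n) → ε * Real.sqrt (∑ n, (u n) ^ 2) + 1 ≤ ∑ n, c n * u n →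
        ∑ n, lam n * (t * ustar n) ^ 2 ≤ ∑ n, lam n * (u n) ^ 2)) ∧
    (∃ u' : Fin N → ℝ, u' ≠ ustar ∧
      (∀ n, 0 ≤ u' n) ∧ ε * Real.sqrt (∑ n, (u' n) ^ 2) + 1 ≤ ∑ n, c n * u' n ∧
      (∀ u : Fin N → ℝ,
        (∀ n, 0 ≤ u n) → ε * Real.sqrt (∑ n, (u n) ^ 2) + 1 ≤ ∑ n, c n * u n →
        ∑ n, lam n * (u' n) ^ 2 ≤ ∑ n, lam n * (u n) ^ 2)) := by
  have hmin : IsMinOn (rabObjective lam) (rabFeasibleSet c ε) ustar :=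
    isMinOn_iff.2 fun u hu => hopt u hu.1 hu.2
  obtain ⟨v, hv, hv_supp⟩ := exists_mem_rabFeasibleSet_of_sq_lt_sum (fun n _ => hc n) hbig
  have hnonpos : rabObjective lam ustar ≤ 0 := by
    simpa [rabObjective_eq_zero_of_support_subset (fun n hn => (mem_filter.1 hn).2) hv_supp]
      using isMinOn_iff.1 hmin v hv
  have hscaled : ∀ t : ℝ, 1 ≤ t → t • ustar ∈ rabFeasibleSet c ε ∧
      IsMinOn (rabObjective lam) (rabFeasibleSet c ε) (t • ustar) := fun t ht =>
    ⟨smul_mem_rabFeasibleSet hfeas ht, hmin.smul_of_nonpos hnonpos ht (rabObjective_smul _ _ _)⟩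
  refine ⟨fun t ht => ⟨(hscaled t ht.le).1, fun u hu₁ hu₂ =>
    isMinOn_iff.1 (hscaled t ht.le).2 u ⟨hu₁, hu₂⟩⟩, ?_⟩
  obtain ⟨h2feas, h2min⟩ := hscaled 2 one_le_two
  have hne : (2 : ℝ) • ustar ≠ ustar := by
    rw [two_smul, Ne, add_eq_left]
    exact ne_zero_of_mem_rabFeasibleSet hfeas
  exact ⟨2 • ustar, hne, h2feas.1, h2feas.2, fun u hu₁ hu₂ => isMinOn_iff.1 h2min u ⟨hu₁, hu₂⟩⟩

open Classical in
/-- non-uniqueness, rank-deficient case with μ = 0: with `λ ≥ 0`,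
`I₀ = {n : λ_n = 0}`, `c ≥ 0`, `0 < ε` and `∑_{I₀} c_n² > ε²`, if `u⋆` is a
global minimizer of `∑ λ_n u_n²` over `{u ≥ 0 : ∑ c_n u_n ≥ ε‖u‖₂ + 1}`, then
`t·u⋆` is also a global minimizer for every `t > 1`; in particular the minimizer
is not unique. -/
theorem rab_nonuniqueness_zero_multiplier (N : ℕ)
    (lam c : Fin N → ℝ) (hlam : ∀ n, 0 ≤ lam n) (hc : ∀ n, 0 ≤ c n)
    (ε : ℝ) (hε : 0 < ε)
    (hbig : ε ^ 2 < ∑ n ∈ Finset.univ.filter (fun n => lam n = 0), (c n) ^ 2)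
    (ustar : Fin N → ℝ)
    (hfeas : (∀ n, 0 ≤ ustar n) ∧
      ε * Real.sqrt (∑ n, (ustar n) ^ 2) + 1 ≤ ∑ n, c n * ustar n)
    (hopt : ∀ u : Fin N → ℝ,
      (∀ n, 0 ≤ u n) → ε * Real.sqrt (∑ n, (u n) ^ 2) + 1 ≤ ∑ n, c n * u n →
      ∑ n, lam n * (ustar n) ^ 2 ≤ ∑ n, lam n * (u n) ^ 2) :
    (∀ t : ℝ, 1 < t →
      ((∀ n, 0 ≤ t * ustar n) ∧
        ε * Real.sqrt (∑ n, (t * ustar n) ^ 2) + 1 ≤ ∑ n, c n * (t * ustar n)) ∧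
      (∀ u : Fin N → ℝ,
        (∀ n, 0 ≤ u n) → ε * Real.sqrt (∑ n, (u n) ^ 2) + 1 ≤ ∑ n, c n * u n →
        ∑ n, lam n * (t * ustar n) ^ 2 ≤ ∑ n, lam n * (u n) ^ 2)) ∧
    (∃ u' : Fin N → ℝ, u' ≠ ustar ∧
      (∀ n, 0 ≤ u' n) ∧ ε * Real.sqrt (∑ n, (u' n) ^ 2) + 1 ≤ ∑ n, c n * u' n ∧
      (∀ u : Fin N → ℝ,
        (∀ n, 0 ≤ u n) → ε * Real.sqrt (∑ n, (u n) ^ 2) + 1 ≤ ∑ n, c n * u n →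
        ∑ n, lam n * (u' n) ^ 2 ≤ ∑ n, lam n * (u n) ^ 2)) :=
  rab_nonuniqueness_zero_multiplier_general N lam c hc ε hbig ustar hfeas hopt
end

section
/- (Nonexistence at the critical uncertainty level, Example 4) Consider the set S = {(w₁, w₂) ∈ ℝ² : w₁ + 2w₂ ≥ 2·√(w₁² + w₂²) + 1}. Then S is nonempty (e.g. (2,4) ∈ S), every (w₁, w₂) ∈ S satisfies w₁ > 1, for every δ > 0 there exists (w₁, w₂) ∈ S with w₁ = 1 + δ, and consequently the infimum of w₁² over S equals 1 but is not attained. -/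
/-!
The constraint forces `w₁ ≥ 1 + 2 (√(w₁² + w₂²) - w₂)`, and the bracket is positive as soon as
`w₁ ≠ 0`, so `w₁ > 1` on `S`. Conversely, for `w₁ = 1 + δ` the choice `w₂ = w₁² / δ` gives
`2 √(w₁² + w₂²) ≤ 2 w₂ + δ`, so every `w₁ > 1` occurs: the infimum `1` of `w₁²` is approached
along a branch with `w₂ → ∞` and never reached.
-/

open Set

def rabExampleSet : Set (ℝ × ℝ) :=
  {p | 2 * √(p.1 ^ 2 + p.2 ^ 2) + 1 ≤ p.1 + 2 * p.2}

lemma Real.sqrt_sq_add_sq_le {x y δ : ℝ} (hy : 0 ≤ y) (hδ : 0 ≤ δ) (h : x ^ 2 ≤ δ * y) :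
    √(x ^ 2 + y ^ 2) ≤ y + δ / 2 :=
  (Real.sqrt_le_left (by positivity)).2 (by nlinarith [sq_nonneg δ])

lemma Set.image_sq_Ioi {a : ℝ} (ha : 0 ≤ a) : (· ^ 2) '' Ioi a = Ioi (a ^ 2) := by
  ext y
  constructor
  · rintro ⟨x, hx, rfl⟩
    exact pow_lt_pow_left₀ hx ha two_ne_zero
  · intro hy
    have hy₀ : 0 ≤ y := (sq_nonneg a).trans hy.le
    exact ⟨√y, (Real.lt_sqrt ha).2 hy, Real.sq_sqrt hy₀⟩

namespace rabExampleSet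

lemma one_lt_fst {p : ℝ × ℝ} (hp : p ∈ rabExampleSet) : 1 < p.1 := by
  obtain ⟨x, y⟩ := p
  change 2 * √(x ^ 2 + y ^ 2) + 1 ≤ x + 2 * y at hp
  have hx : 1 ≤ x := by
    have := Real.le_sqrt_of_sq_le (le_add_of_nonneg_left (sq_nonneg x) : y ^ 2 ≤ x ^ 2 + y ^ 2)
    linarith
  have := Real.lt_sqrt_of_sq_lt (lt_add_of_pos_left (y ^ 2) (by positivity) : y ^ 2 < x ^ 2 + y ^ 2)
  linarith

lemma mk_mem {δ : ℝ} (hδ : 0 < δ) : (1 + δ, (1 + δ) ^ 2 / δ) ∈ rabExampleSet := by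
  have hδy : δ * ((1 + δ) ^ 2 / δ) = (1 + δ) ^ 2 := mul_div_cancel₀ _ hδ.ne'
  have := Real.sqrt_sq_add_sq_le (by positivity) hδ.le hδy.ge
  change 2 * √((1 + δ) ^ 2 + ((1 + δ) ^ 2 / δ) ^ 2) + 1 ≤ 1 + δ + 2 * ((1 + δ) ^ 2 / δ)
  linarith

lemma image_fst : Prod.fst '' rabExampleSet = Ioi 1 := by
  ext x
  constructor
  · rintro ⟨p, hp, rfl⟩
    exact one_lt_fst hp
  · intro hx
    refine ⟨_, mk_mem (sub_pos.2 hx), ?_⟩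
    ring

lemma image_fst_sq : (fun p : ℝ × ℝ => p.1 ^ 2) '' rabExampleSet = Ioi 1 := by
  rw [← image_image (· ^ 2) Prod.fst, image_fst, image_sq_Ioi zero_le_one, one_pow]

end rabExampleSet

/-- nonexistence at the critical uncertainty level, Example 4:
for `S = {(w₁,w₂) : w₁ + 2w₂ ≥ 2√(w₁²+w₂²) + 1}`, `(2,4) ∈ S`, every point of
`S` has `w₁ > 1`, every `w₁ = 1 + δ` with `δ > 0` is realized in `S`, and the
infimum of `w₁²` over `S` is `1` but is not attained. -/
theorem rab_example_nonexistence :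
    ((2 : ℝ), (4 : ℝ)) ∈
      {p : ℝ × ℝ | 2 * Real.sqrt (p.1 ^ 2 + p.2 ^ 2) + 1 ≤ p.1 + 2 * p.2} ∧
    (∀ p : ℝ × ℝ,
      p ∈ {p : ℝ × ℝ | 2 * Real.sqrt (p.1 ^ 2 + p.2 ^ 2) + 1 ≤ p.1 + 2 * p.2} →
      1 < p.1) ∧
    (∀ δ : ℝ, 0 < δ → ∃ p : ℝ × ℝ,
      p ∈ {p : ℝ × ℝ | 2 * Real.sqrt (p.1 ^ 2 + p.2 ^ 2) + 1 ≤ p.1 + 2 * p.2} ∧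
      p.1 = 1 + δ) ∧
    IsGLB ((fun p : ℝ × ℝ => p.1 ^ 2) ''
      {p : ℝ × ℝ | 2 * Real.sqrt (p.1 ^ 2 + p.2 ^ 2) + 1 ≤ p.1 + 2 * p.2}) 1 ∧
    ¬ ∃ p : ℝ × ℝ,
      p ∈ {p : ℝ × ℝ | 2 * Real.sqrt (p.1 ^ 2 + p.2 ^ 2) + 1 ≤ p.1 + 2 * p.2} ∧
      p.1 ^ 2 = 1 := by
  change (2, 4) ∈ rabExampleSet ∧ (∀ p ∈ rabExampleSet, 1 < p.1) ∧
    (∀ δ : ℝ, 0 < δ → ∃ p ∈ rabExampleSet, p.1 = 1 + δ) ∧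
    IsGLB ((fun p : ℝ × ℝ => p.1 ^ 2) '' rabExampleSet) 1 ∧
    ¬ ∃ p ∈ rabExampleSet, p.1 ^ 2 = 1
  refine ⟨?_, fun p hp => rabExampleSet.one_lt_fst hp,
    fun δ hδ => ⟨_, rabExampleSet.mk_mem hδ, rfl⟩, ?_, ?_⟩
  · convert rabExampleSet.mk_mem one_pos using 2 <;> norm_num
  · rw [rabExampleSet.image_fst_sq]
    exact isGLB_Ioi
  · rintro ⟨p, hp, hp₁⟩
    have : p.1 ^ 2 ∈ Ioi 1 := rabExampleSet.image_fst_sq ▸ mem_image_of_mem _ hp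
    exact this.ne' hp₁
end

section
/- (Nonexistence at the critical uncertainty level, general claim) Let λ ∈ ℝ^N with λ_n ≥ 0 for all n, let I₀ = {n : λ_n = 0} be nonempty, let c ∈ ℝ^N with c_n ≥ 0 for all n, and let ε > 0 satisfy ε² = ∑_{n∈I₀} c_n² and ε² < ∑_{n=1}^N c_n². Then the feasible set {u ∈ ℝ^N : u ≥ 0, ∑_{n=1}^N c_n u_n ≥ ε‖u‖₂ + 1} is nonempty, but the infimum of ∑_{n=1}^N λ_n u_n² over this set is not attained by any u in the set. -/
/-!
For feasible `u`, Cauchy–Schwarz with `‖c_{I₀}‖ = ε` gives `∑_{I₀} c_n u_n ≤ ε ‖u_{I₀}‖ ≤ ε ‖u‖`, so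
`∑_{n ∉ I₀} c_n u_n ≥ 1`; then `u ≠ 0` off `I₀`, so `‖u_{I₀}‖ < ‖u‖` and the inequality is strict.
Shrink `u` off `I₀` by a factor `r < 1` that keeps this sum above `1` and put `T c` on `I₀`. The gain
`T ε²` in `∑ c_n u_n` matches the growth of `ε ‖u‖` up to `q / 2T`, where `q` is the squared norm off
`I₀` (as `√(X² + q) ≤ X + q / 2X`). So for large `T` the new point is feasible, while the objective,
which does not see `I₀`, has been multiplied by `r² < 1`.
-/

open Finset

variable {ι : Type*}

lemma sqrt_sq_add_le {X q : ℝ} (hX : 0 < X) (hq : 0 ≤ q) : √(X ^ 2 + q) ≤ X + q / (2 * X) := by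
  rw [Real.sqrt_le_left (by positivity)]
  have : (X + q / (2 * X)) ^ 2 = X ^ 2 + q + (q / (2 * X)) ^ 2 := by field_simp; ring
  nlinarith [sq_nonneg (q / (2 * X))]

lemma sum_mul_le_of_sum_sq_eq {s : Finset ι} {c : ι → ℝ} {ε : ℝ} (hε : 0 ≤ ε)
    (hcs : ∑ n ∈ s, c n ^ 2 = ε ^ 2) (u : ι → ℝ) :
    ∑ n ∈ s, c n * u n ≤ ε * √(∑ n ∈ s, u n ^ 2) := by
  have := Real.sum_mul_le_sqrt_mul_sqrt s c u
  rwa [hcs, Real.sqrt_sq hε] at this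

variable [Fintype ι]

lemma sum_apply_ite_mem [DecidableEq ι] (s : Finset ι) (f g : ι → ℝ) (h : ι → ℝ → ℝ) :
    ∑ n, h n (if n ∈ s then f n else g n) = ∑ n ∈ s, h n (f n) + ∑ n ∈ sᶜ, h n (g n) := by
  rw [← sum_add_sum_compl s]
  congr 1 <;> refine sum_congr rfl fun n hn => ?_
  · rw [if_pos hn]
  · rw [if_neg (mem_compl.1 hn)]

lemma exists_nonneg_feasible {c : ι → ℝ} (hc : ∀ n, 0 ≤ c n) {ε : ℝ}
    (hlt : ε ^ 2 < ∑ n, c n ^ 2) :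
    ∃ u : ι → ℝ, (∀ n, 0 ≤ u n) ∧ ε * √(∑ n, u n ^ 2) + 1 ≤ ∑ n, c n * u n := by
  set B := ∑ n, c n ^ 2
  have hB : 0 < B := lt_of_le_of_lt (sq_nonneg ε) hlt
  have hgap : 0 < B - ε * √B := by
    nlinarith [Real.lt_sqrt_of_sq_lt hlt, Real.sq_sqrt hB.le, Real.sqrt_pos.2 hB]
  set t := (B - ε * √B)⁻¹
  have ht : 0 < t := inv_pos.2 hgap
  refine ⟨fun n => t * c n, fun n => mul_nonneg ht.le (hc n), ?_⟩
  have hnorm : √(∑ n, (t * c n) ^ 2) = t * √B := by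
    simp_rw [mul_pow, ← mul_sum, Real.sqrt_mul (sq_nonneg t), Real.sqrt_sq ht.le, B]
  have hinner : ∑ n, c n * (t * c n) = t * B := by
    rw [mul_sum]; exact sum_congr rfl fun n _ => by ring
  have : t * (B - ε * √B) = 1 := inv_mul_cancel₀ hgap.ne'
  rw [hnorm, hinner]
  nlinarith

lemma sum_mul_sq_pos {lam u : ι → ℝ} (hlam : ∀ n, 0 ≤ lam n) {m : ι} (hlam_m : lam m ≠ 0)
    (hu : u m ≠ 0) : 0 < ∑ n, lam n * u n ^ 2 :=
  sum_pos' (fun n _ => mul_nonneg (hlam n) (sq_nonneg _))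
    ⟨m, mem_univ m, mul_pos ((hlam m).lt_of_ne' hlam_m) (sq_pos_of_ne_zero hu)⟩

section Critical

variable [DecidableEq ι] {s : Finset ι} {c : ι → ℝ} {ε : ℝ}

lemma one_lt_sum_compl_of_feasible (hε : 0 < ε) (hcs : ∑ n ∈ s, c n ^ 2 = ε ^ 2) {u : ι → ℝ}
    (hu : ε * √(∑ n, u n ^ 2) + 1 ≤ ∑ n, c n * u n) : 1 < ∑ n ∈ sᶜ, c n * u n := by
  have hCS := sum_mul_le_of_sum_sq_eq hε.le hcs u
  have hinner := sum_add_sum_compl s fun n => c n * u n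
  have hnorm := sum_add_sum_compl s fun n => u n ^ 2
  have hcompl : 0 ≤ ∑ n ∈ sᶜ, u n ^ 2 := sum_nonneg fun n _ => sq_nonneg _
  have hmono : √(∑ n ∈ s, u n ^ 2) ≤ √(∑ n, u n ^ 2) := Real.sqrt_le_sqrt (by linarith)
  have hgain : 1 + ε * (√(∑ n, u n ^ 2) - √(∑ n ∈ s, u n ^ 2)) ≤ ∑ n ∈ sᶜ, c n * u n := by
    linarith
  obtain ⟨m, hm, hcum⟩ : ∃ m ∈ sᶜ, c m * u m ≠ 0 :=
    exists_ne_zero_of_sum_ne_zero (by nlinarith)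
  have hcompl_pos : 0 < ∑ n ∈ sᶜ, u n ^ 2 :=
    sum_pos' (fun n _ => sq_nonneg _) ⟨m, hm, sq_pos_of_ne_zero (right_ne_zero_of_mul hcum)⟩
  have hstrict : √(∑ n ∈ s, u n ^ 2) < √(∑ n, u n ^ 2) :=
    Real.sqrt_lt_sqrt (sum_nonneg fun n _ => sq_nonneg _) (by linarith)
  nlinarith [mul_pos hε (sub_pos.2 hstrict)]

lemma exists_feasible_of_one_lt_sum_compl (hε : 0 < ε) (hcs : ∑ n ∈ s, c n ^ 2 = ε ^ 2)
    {w : ι → ℝ} (hw : 1 < ∑ n ∈ sᶜ, c n * w n) :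
    ∃ T > 0, ε * √(∑ n, (if n ∈ s then T * c n else w n) ^ 2) + 1 ≤
      ∑ n, c n * (if n ∈ s then T * c n else w n) := by
  set S := ∑ n ∈ sᶜ, c n * w n
  set q := ∑ n ∈ sᶜ, w n ^ 2
  have hq : 0 ≤ q := sum_nonneg fun n _ => sq_nonneg _
  set T := (q + 1) / (S - 1)
  have hT : 0 < T := div_pos (by linarith) (by linarith)
  refine ⟨T, hT, ?_⟩
  have hnorm : ∑ n, (if n ∈ s then T * c n else w n) ^ 2 = (T * ε) ^ 2 + q := by
    rw [sum_apply_ite_mem s _ _ fun _ x => x ^ 2]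
    simp_rw [mul_pow, ← mul_sum, hcs, q]
  have hinner : ∑ n, c n * (if n ∈ s then T * c n else w n) = T * ε ^ 2 + S := by
    rw [sum_apply_ite_mem s _ _ fun n x => c n * x, ← hcs, mul_sum]
    congr 1
    exact sum_congr rfl fun n _ => by ring
  have hpenalty : q / (2 * T) ≤ S - 1 := by
    have : T * (S - 1) = q + 1 := div_mul_cancel₀ _ (by linarith)
    rw [div_le_iff₀ (by positivity)]
    nlinarith
  calc ε * √(∑ n, (if n ∈ s then T * c n else w n) ^ 2) + 1
      = ε * √((T * ε) ^ 2 + q) + 1 := by rw [hnorm]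
    _ ≤ ε * (T * ε + q / (2 * (T * ε))) + 1 := by
      gcongr; exact sqrt_sq_add_le (by positivity) hq
    _ = T * ε ^ 2 + q / (2 * T) + 1 := by field_simp
    _ ≤ _ := by rw [hinner]; linarith

end Critical

open Classical in
theorem rab_nonexistence_critical_general (N : ℕ)
    (lam c : Fin N → ℝ) (hlam : ∀ n, 0 ≤ lam n) (hc : ∀ n, 0 ≤ c n)
    (ε : ℝ) (hε : 0 < ε)
    (hcrit : ε ^ 2 = ∑ n ∈ Finset.univ.filter (fun n => lam n = 0), (c n) ^ 2)
    (hlt : ε ^ 2 < ∑ n, (c n) ^ 2) :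
    ({u : Fin N → ℝ | (∀ n, 0 ≤ u n) ∧
        ε * Real.sqrt (∑ n, (u n) ^ 2) + 1 ≤ ∑ n, c n * u n}).Nonempty ∧
    ¬ ∃ u : Fin N → ℝ,
        ((∀ n, 0 ≤ u n) ∧ ε * Real.sqrt (∑ n, (u n) ^ 2) + 1 ≤ ∑ n, c n * u n) ∧
        ∀ v : Fin N → ℝ,
          (∀ n, 0 ≤ v n) → ε * Real.sqrt (∑ n, (v n) ^ 2) + 1 ≤ ∑ n, c n * v n →
          ∑ n, lam n * (u n) ^ 2 ≤ ∑ n, lam n * (v n) ^ 2 := by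
  refine ⟨exists_nonneg_feasible hc hlt, ?_⟩
  rintro ⟨u, ⟨hu0, hu⟩, hmin⟩
  set s := Finset.univ.filter fun n => lam n = 0
  have hS := one_lt_sum_compl_of_feasible hε hcrit.symm hu
  obtain ⟨m, hm, hcum⟩ := exists_ne_zero_of_sum_ne_zero (by linarith : ∑ n ∈ sᶜ, c n * u n ≠ 0)
  obtain ⟨r, hrS, hr1⟩ := exists_between ((div_lt_one (by linarith)).2 hS)
  have hr0 : 0 < r := lt_trans (by positivity) hrS
  obtain ⟨T, hT, hv⟩ := exists_feasible_of_one_lt_sum_compl (w := fun n => r * u n) hε hcrit.symm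
    (by simp_rw [mul_left_comm (c _) r, ← mul_sum]; exact (div_lt_iff₀ (by linarith)).1 hrS)
  set v := fun n => if n ∈ s then T * c n else r * u n
  have hv0 : ∀ n, 0 ≤ v n := fun n => by
    simp only [v]; split_ifs
    exacts [mul_nonneg hT.le (hc n), mul_nonneg hr0.le (hu0 n)]
  have hobj : ∑ n, lam n * v n ^ 2 = r ^ 2 * ∑ n, lam n * u n ^ 2 := by
    rw [mul_sum]
    refine sum_congr rfl fun n _ => ?_
    by_cases hn : n ∈ s
    · simp [(mem_filter.1 hn).2]
    · simp only [v, if_neg hn]; ring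
  have hobj_pos : 0 < ∑ n, lam n * u n ^ 2 :=
    sum_mul_sq_pos hlam (by simpa [s] using hm) (right_ne_zero_of_mul hcum)
  have hmin_v := hmin v hv0 hv
  rw [hobj] at hmin_v
  nlinarith [mul_lt_mul_of_pos_right (show r ^ 2 < 1 by nlinarith) hobj_pos]

open Classical in
/-- nonexistence at the critical uncertainty level, general
claim: with `λ ≥ 0`, `I₀ = {n : λ_n = 0}` nonempty, `c ≥ 0`, `ε > 0`,
`ε² = ∑_{I₀} c_n²` and `ε² < ∑ c_n²`, the feasible set
`{u ≥ 0 : ∑ c_n u_n ≥ ε‖u‖₂ + 1}` is nonempty, but the infimum of `∑ λ_n u_n²`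
over it is not attained. -/
theorem rab_nonexistence_critical (N : ℕ)
    (lam c : Fin N → ℝ) (hlam : ∀ n, 0 ≤ lam n) (hc : ∀ n, 0 ≤ c n)
    (hI0 : ∃ n, lam n = 0)
    (ε : ℝ) (hε : 0 < ε)
    (hcrit : ε ^ 2 = ∑ n ∈ Finset.univ.filter (fun n => lam n = 0), (c n) ^ 2)
    (hlt : ε ^ 2 < ∑ n, (c n) ^ 2) :
    ({u : Fin N → ℝ | (∀ n, 0 ≤ u n) ∧
        ε * Real.sqrt (∑ n, (u n) ^ 2) + 1 ≤ ∑ n, c n * u n}).Nonempty ∧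
    ¬ ∃ u : Fin N → ℝ,
        ((∀ n, 0 ≤ u n) ∧ ε * Real.sqrt (∑ n, (u n) ^ 2) + 1 ≤ ∑ n, c n * u n) ∧
        ∀ v : Fin N → ℝ,
          (∀ n, 0 ≤ v n) → ε * Real.sqrt (∑ n, (v n) ^ 2) + 1 ≤ ∑ n, c n * v n →
          ∑ n, lam n * (u n) ^ 2 ≤ ∑ n, lam n * (v n) ^ 2 :=
  rab_nonexistence_critical_general N lam c hlam hc ε hε hcrit hlt
end
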